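/- arXiv:2603.11775 — 14 statements merged into one kernel-verified Lean document; each statement's English description precedes it below -/
import Mathlib

section
/- Let s, u, m be points in the Euclidean plane with s ≠ u and m ≠ u, let r be a unit vector, and let 0 ≤ β < π/2. If ⟪r, m − u⟫ = 0 (the segment from u to m is perpendicular to r) and the angle between u − s and r is at most β, then sin(∠ s u m) ≥ cos β, where ∠ s u m is the angle at vertex u. -/
open Real EuclideanGeometry RealInnerProductSpace

/-!
Writing `v = s - u`, Bessel's inequality for the orthonormal pair `r / ‖r‖`, `(m - u) / ‖m - u‖` gives
`cos² ∠(v, r) + cos² ∠(v, m - u) ≤ 1`, i.e. `|cos ∠(v, r)| ≤ sin (∠ s u m)`; and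
`cos ∠(u - s, r) = -cos ∠(v, r)` is at least `cos β` since cosine decreases on `[0, π]`.
-/

open InnerProductGeometry

variable {V : Type*} [NormedAddCommGroup V] [InnerProductSpace ℝ V]

theorem orthonormal_pair {e f : V} (he : ‖e‖ = 1) (hf : ‖f‖ = 1) (hef : ⟪e, f⟫ = 0) :
    Orthonormal ℝ ![e, f] := by
  rw [orthonormal_iff_ite]
  have hfe : ⟪f, e⟫ = 0 := by rwa [real_inner_comm]
  simp [Fin.forall_fin_two, he, hf, hef, hfe]

theorem inner_sq_add_inner_sq_le_norm_sq {e f : V} (he : ‖e‖ = 1) (hf : ‖f‖ = 1)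
    (hef : ⟪e, f⟫ = 0) (v : V) : ⟪e, v⟫ ^ 2 + ⟪f, v⟫ ^ 2 ≤ ‖v‖ ^ 2 := by
  simpa [Fin.sum_univ_two] using
    (orthonormal_pair he hf hef).sum_inner_products_le v (s := Finset.univ)

theorem cos_angle_of_norm_eq_one {e : V} (he : ‖e‖ = 1) (v : V) :
    cos (angle v e) = ⟪e, v⟫ / ‖v‖ := by
  rw [cos_angle, he, mul_one, real_inner_comm]

theorem cos_sq_angle_add_cos_sq_angle_le_one {e f : V} (hef : ⟪e, f⟫ = 0) (v : V) :
    cos (angle v e) ^ 2 + cos (angle v f) ^ 2 ≤ 1 := by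
  rcases eq_or_ne e 0 with rfl | he
  · simpa using abs_cos_le_one _
  rcases eq_or_ne f 0 with rfl | hf
  · simpa using abs_cos_le_one _
  have horth : ⟪NormedSpace.normalize e, NormedSpace.normalize f⟫ = 0 := by
    rw [NormedSpace.normalize, NormedSpace.normalize, real_inner_smul_left,
      real_inner_smul_right, hef, mul_zero, mul_zero]
  have he₁ := NormedSpace.norm_normalize_eq_one_iff.2 he
  have hf₁ := NormedSpace.norm_normalize_eq_one_iff.2 hf
  rw [← angle_normalize_right v e, ← angle_normalize_right v f, cos_angle_of_norm_eq_one he₁,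
    cos_angle_of_norm_eq_one hf₁, div_pow, div_pow, ← add_div]
  exact div_le_one_of_le₀ (inner_sq_add_inner_sq_le_norm_sq he₁ hf₁ horth v) (by positivity)

theorem abs_cos_angle_le_sin_angle {e f : V} (hef : ⟪e, f⟫ = 0) (v : V) :
    |cos (angle v e)| ≤ sin (angle v f) := by
  rw [← sq_le_sq₀ (abs_nonneg _) (sin_angle_nonneg v f), sq_abs, sin_sq]
  linarith [cos_sq_angle_add_cos_sq_angle_le_one hef v]

theorem sin_angle_ge_cos_general
    (s u m : EuclideanSpace ℝ (Fin 2))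
    (r : EuclideanSpace ℝ (Fin 2))
    (β : ℝ) (hβ : β < Real.pi / 2)
    (hperp : ⟪r, m - u⟫ = 0)
    (hangle : InnerProductGeometry.angle (u - s) r ≤ β) :
    Real.sin (∠ s u m) ≥ Real.cos β := by
  have hcos : cos β ≤ cos (angle (u - s) r) :=
    cos_le_cos_of_nonneg_of_le_pi (angle_nonneg _ _) (by linarith [pi_pos]) hangle
  have hflip : cos (angle (u - s) r) = -cos (angle (s - u) r) := by
    rw [← neg_sub, angle_neg_left, cos_pi_sub]
  calc cos β ≤ |cos (angle (s - u) r)| := by linarith [neg_le_abs (cos (angle (s - u) r))]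
    _ ≤ sin (∠ s u m) := abs_cos_angle_le_sin_angle hperp (s - u)

/-- The angle estimate from the proof of the paper's Lemma 3: if the segment `u m` is
perpendicular to a unit vector `r` and the angle between `u - s` and `r` is at most
`β < π/2`, then `sin (∠ s u m) ≥ cos β`. -/
theorem sin_angle_ge_cos
    (s u m : EuclideanSpace ℝ (Fin 2))
    (hsu : s ≠ u) (hmu : m ≠ u)
    (r : EuclideanSpace ℝ (Fin 2)) (hr : ‖r‖ = 1)
    (β : ℝ) (hβ0 : 0 ≤ β) (hβ : β < Real.pi / 2)
    (hperp : ⟪r, m - u⟫ = 0)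
    (hangle : InnerProductGeometry.angle (u - s) r ≤ β) :
    Real.sin (∠ s u m) ≥ Real.cos β :=
  sin_angle_ge_cos_general s u m r β hβ hperp hangle
end

section
/- Let 0 < ε ≤ 1, let r be a unit vector in the Euclidean plane, and let s, u, q be points with angle(u − s, r) ≤ ε/16, angle(q − s, r) ≤ ε/16, and ⟪r, u − s⟫ ≤ ⟪r, q − s⟫. Let m be a point on the segment from s to q with ⟪r, m − s⟫ = ⟪r, u − s⟫. Then dist(u, m) ≤ (ε/4) · dist(s, m). -/
open Real EuclideanGeometry RealInnerProductSpace

lemma cone_aux (δ : ℝ) (hδ0 : 0 < δ) (hδ1 : δ ≤ 1/16)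
    (r v : EuclideanSpace ℝ (Fin 2)) (hr : ‖r‖ = 1)
    (hang : InnerProductGeometry.angle v r ≤ δ) :
    0 < ⟪r, v⟫ ∧ ⟪r, v⟫ ≤ ‖v‖ ∧ ‖v - ⟪r, v⟫ • r‖ ≤ 2 * δ * ⟪r, v⟫ := by
  have hv : v ≠ 0 := by
    rintro rfl
    rw [InnerProductGeometry.angle_zero_left] at hang
    nlinarith [Real.pi_gt_three]
  set θ := InnerProductGeometry.angle v r with hθ
  have hθ0 : 0 ≤ θ := InnerProductGeometry.angle_nonneg _ _
  have hvpos : 0 < ‖v‖ := norm_pos_iff.mpr hv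
  have hcos : Real.cos θ = ⟪v, r⟫ / ‖v‖ := by
    rw [hθ, InnerProductGeometry.cos_angle, hr, mul_one]
  have hinner : ⟪v, r⟫ = Real.cos θ * ‖v‖ := (div_eq_iff hvpos.ne').mp hcos.symm
  have hcosδ : Real.cos δ ≤ Real.cos θ := by
    apply Real.cos_le_cos_of_nonneg_of_le_pi hθ0 _ hang
    nlinarith [Real.pi_gt_three]
  have hcosδ2 : 1 - δ ^ 2 / 2 ≤ Real.cos δ := Real.one_sub_sq_div_two_le_cos
  have hcos1 : Real.cos θ ≤ 1 := Real.cos_le_one θ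
  have hδsq : δ ^ 2 ≤ 1 / 256 := by nlinarith
  have hcoslb : 1 / 2 ≤ Real.cos θ := by linarith
  have hcoslb2 : 1 - δ ^ 2 / 2 ≤ Real.cos θ := by linarith
  have hc : ⟪r, v⟫ = Real.cos θ * ‖v‖ := (real_inner_comm v r).trans hinner
  have hcpos : 0 < ⟪r, v⟫ := by
    rw [hc]; exact mul_pos (by linarith) hvpos
  have hcle : ⟪r, v⟫ ≤ ‖v‖ := by
    rw [hc]
    exact mul_le_of_le_one_left hvpos.le hcos1
  refine ⟨hcpos, hcle, ?_⟩
  have hsq : ‖v - ⟪r, v⟫ • r‖ ^ 2 = ‖v‖ ^ 2 - ⟪r, v⟫ ^ 2 := by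
    rw [norm_sub_sq_real, inner_smul_right, norm_smul, hr]
    rw [real_inner_comm v r]
    simp only [Real.norm_eq_abs, mul_one]
    rw [sq_abs]
    ring
  have hcossq : (1 - δ ^ 2 / 2) ^ 2 ≤ Real.cos θ ^ 2 := by nlinarith
  have hub : ‖v - ⟪r, v⟫ • r‖ ^ 2 ≤ (‖v‖ * δ) ^ 2 := by
    rw [hsq, hc]
    have h4 : ‖v‖ ^ 2 * (1 - δ ^ 2 / 2) ^ 2 ≤ ‖v‖ ^ 2 * Real.cos θ ^ 2 :=
      mul_le_mul_of_nonneg_left hcossq (sq_nonneg _)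
    nlinarith [sq_nonneg ‖v‖, mul_nonneg (sq_nonneg ‖v‖) (pow_nonneg hδ0.le 4)]
  have h1 : ‖v - ⟪r, v⟫ • r‖ ≤ ‖v‖ * δ := by
    nlinarith [norm_nonneg (v - ⟪r, v⟫ • r), mul_nonneg hvpos.le hδ0.le]
  have h2 : ‖v‖ ≤ 2 * ⟪r, v⟫ := by
    rw [hc]
    nlinarith [mul_le_mul_of_nonneg_right hcoslb hvpos.le]
  have h3 := mul_le_mul_of_nonneg_right h2 hδ0.le
  linarith

/-- The key displayed inequality `d(u,m) ≤ (ε/4)·d(s,m)` in the proof of the paper's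
Lemma 3: `u` and `q` lie in the cone with apex `s`, axis `r` and half-angle `ε/16`,
`u` has cone distance at most that of `q`, and `m` is the point on the segment `s q`
with the same cone distance as `u`. -/
theorem dist_u_m_le
    (ε : ℝ) (hε0 : 0 < ε) (hε1 : ε ≤ 1)
    (r : EuclideanSpace ℝ (Fin 2)) (hr : ‖r‖ = 1)
    (s u q m : EuclideanSpace ℝ (Fin 2))
    (hu : InnerProductGeometry.angle (u - s) r ≤ ε / 16)
    (hq : InnerProductGeometry.angle (q - s) r ≤ ε / 16)
    (hle : ⟪r, u - s⟫ ≤ ⟪r, q - s⟫)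
    (hm : m ∈ segment ℝ s q)
    (hmr : ⟪r, m - s⟫ = ⟪r, u - s⟫) :
    dist u m ≤ (ε / 4) * dist s m := by
  set δ := ε / 16 with hδ
  have hδ0 : 0 < δ := by positivity
  have hδ1 : δ ≤ 1 / 16 := by rw [hδ]; linarith
  obtain ⟨hcu, hcule, huP⟩ := cone_aux δ hδ0 hδ1 r (u - s) hr hu
  obtain ⟨a, b, ha, hb, hab, hmeq⟩ := hm
  have hms : m - s = b • (q - s) := by
    rw [← hmeq, show a = 1 - b by linarith]
    module
  have hbpos : 0 < b := by
    rcases lt_or_eq_of_le hb with h | h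
    · exact h
    · exfalso
      rw [hms, ← h, zero_smul, inner_zero_right] at hmr
      linarith
  have hangm : InnerProductGeometry.angle (m - s) r ≤ δ := by
    rw [hms, InnerProductGeometry.angle_smul_left_of_pos _ _ hbpos]
    exact hq
  obtain ⟨hcm, hcmle, hmP⟩ := cone_aux δ hδ0 hδ1 r (m - s) hr hangm
  rw [hmr] at hmP hcmle
  have hkey : u - m = ((u - s) - ⟪r, u - s⟫ • r) - ((m - s) - ⟪r, u - s⟫ • r) := by
    abel
  have hnorm : ‖u - m‖ ≤ 4 * δ * ⟪r, u - s⟫ := by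
    rw [hkey]
    calc ‖((u - s) - ⟪r, u - s⟫ • r) - ((m - s) - ⟪r, u - s⟫ • r)‖
        ≤ ‖(u - s) - ⟪r, u - s⟫ • r‖ + ‖(m - s) - ⟪r, u - s⟫ • r‖ := norm_sub_le _ _
      _ ≤ 2 * δ * ⟪r, u - s⟫ + 2 * δ * ⟪r, u - s⟫ := by linarith
      _ = 4 * δ * ⟪r, u - s⟫ := by ring
  have hdsm : dist s m = ‖m - s‖ := by rw [dist_eq_norm, norm_sub_rev]
  have hdum : dist u m = ‖u - m‖ := dist_eq_norm u m
  rw [hdsm, hdum]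
  have h4 : 4 * δ * ⟪r, u - s⟫ = (ε / 4) * ⟪r, u - s⟫ := by rw [hδ]; ring
  have h5 : (ε / 4) * ⟪r, u - s⟫ ≤ (ε / 4) * ‖m - s‖ :=
    mul_le_mul_of_nonneg_left hcmle (by positivity)
  linarith
end

section
/- Let 0 < ε ≤ 1, let r be a unit vector in the Euclidean plane, and let s, u, q be points with angle(u − s, r) ≤ ε/16, angle(q − s, r) ≤ ε/16, and ⟪r, u − s⟫ ≤ ⟪r, q − s⟫ (u and q lie in the cone with apex s, axis r, and opening angle ε/8, and u has cone distance at most that of q). Then dist(u, q) ≤ dist(s, q). -/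
/-!
Put `a = u - s` and `b = q - s`; the claim is `‖a‖² ≤ 2⟪a, b⟫`. Both vectors are within `θ` of
the axis `r`, so the angle between them is at most `2θ`, and projecting on the axis gives
`‖a‖ cos θ ≤ ⟪r, a⟫ ≤ ⟪r, b⟫ ≤ ‖b‖`. Hence
`‖a‖² ≤ 2 cos θ cos 2θ ‖a‖² ≤ 2 cos 2θ ‖a‖ ‖b‖ ≤ 2⟪a, b⟫` as soon as `2 cos θ cos 2θ ≥ 1`,
which holds for `θ ≤ π/8` since then both cosines are at least `cos (π/4) = √2/2`.
-/

open Real EuclideanGeometry RealInnerProductSpace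

theorem one_le_two_mul_cos_mul_cos_two_mul {θ : ℝ} (h0 : 0 ≤ θ) (h : θ ≤ π / 8) :
    1 ≤ 2 * cos θ * cos (2 * θ) := by
  have hcos : ∀ x, 0 ≤ x → x ≤ π / 4 → √2 / 2 ≤ cos x := fun x hx0 hx => by
    rw [← cos_pi_div_four]
    exact cos_le_cos_of_nonneg_of_le_pi hx0 (by linarith [pi_pos]) hx
  have h1 := hcos θ h0 (by linarith [pi_pos])
  have h2 := hcos (2 * θ) (by linarith) (by linarith)
  have hsqrt : 0 ≤ √2 / 2 := by positivity
  nlinarith [sq_sqrt (zero_le_two : (0 : ℝ) ≤ 2), mul_le_mul h1 h2 hsqrt (hsqrt.trans h1)]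

namespace InnerProductGeometry

variable {V : Type*} [NormedAddCommGroup V] [InnerProductSpace ℝ V]

theorem norm_mul_norm_mul_cos_le_inner_of_angle_le {x y : V} {θ : ℝ} (h : angle x y ≤ θ)
    (hθ : θ ≤ π) : ‖x‖ * ‖y‖ * cos θ ≤ ⟪x, y⟫ := by
  rw [← cos_angle_mul_norm_mul_norm, mul_comm (‖x‖ * ‖y‖)]
  exact mul_le_mul_of_nonneg_right
    (cos_le_cos_of_nonneg_of_le_pi (angle_nonneg x y) hθ h) (by positivity)

theorem norm_sub_le_norm_of_angle_le_of_inner_le {a b r : V} {θ : ℝ} (hθ : θ ≤ π / 8)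
    (ha : angle a r ≤ θ) (hb : angle b r ≤ θ) (hab : ⟪r, a⟫ ≤ ⟪r, b⟫) : ‖a - b‖ ≤ ‖b‖ := by
  have hθ0 : 0 ≤ θ := (angle_nonneg a r).trans ha
  have hr : 0 < ‖r‖ := norm_pos_iff.2 <| by
    rintro rfl
    rw [angle_zero_right] at ha
    linarith [pi_pos]
  have hproj : ‖a‖ * cos θ ≤ ‖b‖ := by
    refine le_of_mul_le_mul_right ?_ hr
    calc ‖a‖ * cos θ * ‖r‖ = ‖a‖ * ‖r‖ * cos θ := by ring
      _ ≤ ⟪a, r⟫ := norm_mul_norm_mul_cos_le_inner_of_angle_le ha (by linarith [pi_pos])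
      _ ≤ ⟪b, r⟫ := by rwa [real_inner_comm r a, real_inner_comm r b]
      _ ≤ ‖b‖ * ‖r‖ := real_inner_le_norm b r
  have hangle : angle a b ≤ 2 * θ := by
    linarith [angle_le_angle_add_angle a r b, angle_comm r b]
  have hinner : ‖a‖ * ‖b‖ * cos (2 * θ) ≤ ⟪a, b⟫ :=
    norm_mul_norm_mul_cos_le_inner_of_angle_le hangle (by linarith [pi_pos])
  have hcos2 : 0 ≤ cos (2 * θ) :=
    cos_nonneg_of_neg_pi_div_two_le_of_le (by linarith [pi_pos]) (by linarith [pi_pos])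
  have hkey : ‖a‖ ^ 2 ≤ 2 * ⟪a, b⟫ := by
    calc ‖a‖ ^ 2 ≤ ‖a‖ ^ 2 * (2 * cos θ * cos (2 * θ)) :=
          le_mul_of_one_le_right (by positivity) (one_le_two_mul_cos_mul_cos_two_mul hθ0 hθ)
      _ = 2 * ‖a‖ * cos (2 * θ) * (‖a‖ * cos θ) := by ring
      _ ≤ 2 * ‖a‖ * cos (2 * θ) * ‖b‖ := by gcongr
      _ ≤ 2 * ⟪a, b⟫ := by linarith
  rw [← pow_le_pow_iff_left₀ (norm_nonneg _) (norm_nonneg _) two_ne_zero, norm_sub_sq_real]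
  linarith

end InnerProductGeometry

theorem dist_u_q_le_dist_s_q_general
    (ε : ℝ) (hε1 : ε ≤ 1)
    (r : EuclideanSpace ℝ (Fin 2))
    (s u q : EuclideanSpace ℝ (Fin 2))
    (hu : InnerProductGeometry.angle (u - s) r ≤ ε / 16)
    (hq : InnerProductGeometry.angle (q - s) r ≤ ε / 16)
    (hle : ⟪r, u - s⟫ ≤ ⟪r, q - s⟫) :
    dist u q ≤ dist s q := by
  rw [dist_eq_norm, dist_eq_norm', ← sub_sub_sub_cancel_right u q s]
  exact InnerProductGeometry.norm_sub_le_norm_of_angle_le_of_inner_le (by linarith [pi_gt_three]) hu hq hle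

/-- Conclusion (1) of the paper's Lemma 3 in the obstacle-free Euclidean case: if `u` and
`q` lie in the cone with apex `s`, axis `r` and opening angle `ε/8` (half-angle `ε/16`),
and `u` has cone distance at most that of `q`, then `dist u q ≤ dist s q`. -/
theorem dist_u_q_le_dist_s_q
    (ε : ℝ) (hε0 : 0 < ε) (hε1 : ε ≤ 1)
    (r : EuclideanSpace ℝ (Fin 2)) (hr : ‖r‖ = 1)
    (s u q : EuclideanSpace ℝ (Fin 2))
    (hu : InnerProductGeometry.angle (u - s) r ≤ ε / 16)
    (hq : InnerProductGeometry.angle (q - s) r ≤ ε / 16)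
    (hle : ⟪r, u - s⟫ ≤ ⟪r, q - s⟫) :
    dist u q ≤ dist s q :=
  dist_u_q_le_dist_s_q_general ε hε1 r s u q hu hq hle
end

section
/- Let 0 < ε ≤ 1, let r be a unit vector in the Euclidean plane, and let s, u, q be points with angle(u − s, r) ≤ ε/16, angle(q − s, r) ≤ ε/16, and ⟪r, u − s⟫ ≤ ⟪r, q − s⟫ (u and q lie in the cone with apex s, axis r, and opening angle ε/8, and u has cone distance at most that of q). Then dist(s, u) + (1 + ε) · dist(u, q) ≤ (1 + ε) · dist(s, q). -/
open Real EuclideanGeometry RealInnerProductSpace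

set_option maxHeartbeats 1000000

private lemma aux_poly (ε : ℝ) (hε0 : 0 < ε) (hε1 : ε ≤ 1) :
    2 * ε + ε ^ 2 ≤ 2 * (1 + ε) * ((1 - ε ^ 2 / 512) * (ε * (1 - ε / 64))) := by
  have hb : (0:ℝ) ≤ 15872 - 576 * ε - 63 * ε ^ 2 + ε ^ 3 := by
    nlinarith [mul_nonneg hε0.le (sub_nonneg.mpr hε1), pow_nonneg hε0.le 3]
  nlinarith [mul_nonneg (sq_nonneg ε) hb]

private lemma aux_c2 (ε c : ℝ) (hε0 : 0 < ε) (hε1 : ε ≤ 1)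
    (hc : 1 - ε ^ 2 / 512 ≤ c) (hc1 : c ≤ 1) :
    1 - ε ^ 2 / 128 ≤ 2 * c ^ 2 - 1 := by
  have h0 : (0:ℝ) ≤ c + (1 - ε ^ 2 / 512) := by nlinarith
  nlinarith [mul_nonneg (sub_nonneg.mpr hc) h0, sq_nonneg ε]

private lemma aux_coseps (ε c : ℝ) (hε0 : 0 < ε) (hε1 : ε ≤ 1)
    (hc : 1 - ε ^ 2 / 512 ≤ c) : 1 ≤ (1 + ε) * c := by
  nlinarith [mul_nonneg hε0.le (sub_nonneg.mpr hε1)]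

private lemma aux_R (ε A B c : ℝ) (hε0 : 0 < ε) (hA0 : 0 ≤ A)
    (hAB : A * c ≤ B) (hce : 1 ≤ (1 + ε) * c) : 0 ≤ (1 + ε) * B - A := by
  nlinarith

private lemma aux_step1 (ε c2 : ℝ) (hε0 : 0 < ε) (hε1 : ε ≤ 1)
    (hc2 : 1 - ε ^ 2 / 128 ≤ c2) : ε * (1 - ε / 64) ≤ (1 + ε) * c2 - 1 := by
  nlinarith [mul_nonneg hε0.le (sub_nonneg.mpr hε1)]

private lemma aux_sq (ε A B c c2 D : ℝ) (hε0 : 0 < ε)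
    (hA0 : 0 ≤ A) (hB0 : 0 ≤ B) (hc0 : 0 ≤ c)
    (hAB : A * c ≤ B)
    (hD : D ^ 2 ≤ A ^ 2 + B ^ 2 - 2 * (A * B * c2))
    (hcoef : 0 ≤ (1 + ε) * c2 - 1)
    (hscalar : 2 * ε + ε ^ 2 ≤ 2 * (1 + ε) * (c * ((1 + ε) * c2 - 1))) :
    ((1 + ε) * D) ^ 2 ≤ ((1 + ε) * B - A) ^ 2 := by
  have t2 : A * (A * c) ≤ A * B := mul_le_mul_of_nonneg_left hAB hA0
  have t3 : 0 ≤ 2 * (1 + ε) * ((1 + ε) * c2 - 1) :=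
    mul_nonneg (by linarith) hcoef
  have e2 : (2 * ε + ε ^ 2) * A ^ 2 ≤ 2 * (1 + ε) * ((1 + ε) * c2 - 1) * (A * B) := by
    calc (2 * ε + ε ^ 2) * A ^ 2
        ≤ 2 * (1 + ε) * (c * ((1 + ε) * c2 - 1)) * A ^ 2 :=
          mul_le_mul_of_nonneg_right hscalar (sq_nonneg A)
      _ = 2 * (1 + ε) * ((1 + ε) * c2 - 1) * (A * (A * c)) := by ring
      _ ≤ 2 * (1 + ε) * ((1 + ε) * c2 - 1) * (A * B) :=
          mul_le_mul_of_nonneg_left t2 t3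
  have e1 : (1 + ε) ^ 2 * D ^ 2 ≤
      (1 + ε) ^ 2 * (A ^ 2 + B ^ 2 - 2 * (A * B * c2)) :=
    mul_le_mul_of_nonneg_left hD (by positivity)
  nlinarith [e1, e2]

/-- Conclusion (2) of the paper's Lemma 3 in the obstacle-free Euclidean case: if `u` and
`q` lie in the cone with apex `s`, axis `r` and opening angle `ε/8` (half-angle `ε/16`),
and `u` has cone distance at most that of `q`, then
`dist s u + (1+ε)·dist u q ≤ (1+ε)·dist s q`. -/
theorem detour_via_cone_neighbor
    (ε : ℝ) (hε0 : 0 < ε) (hε1 : ε ≤ 1)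
    (r : EuclideanSpace ℝ (Fin 2)) (hr : ‖r‖ = 1)
    (s u q : EuclideanSpace ℝ (Fin 2))
    (hu : InnerProductGeometry.angle (u - s) r ≤ ε / 16)
    (hq : InnerProductGeometry.angle (q - s) r ≤ ε / 16)
    (hle : ⟪r, u - s⟫ ≤ ⟪r, q - s⟫) :
    dist s u + (1 + ε) * dist u q ≤ (1 + ε) * dist s q := by
  set θ : ℝ := ε / 16 with hθdef
  have hθ0 : 0 < θ := by positivity
  have hθsq : θ ^ 2 = ε ^ 2 / 256 := by rw [hθdef]; ring
  have hθle : θ ≤ 1 / 16 := by rw [hθdef]; linarith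
  have hθpi : θ ≤ π := by nlinarith [Real.pi_gt_three]
  have hcos1 : Real.cos θ ≤ 1 := Real.cos_le_one θ
  have hcoslb : 1 - θ ^ 2 / 2 ≤ Real.cos θ := Real.one_sub_sq_div_two_le_cos
  have hclb : 1 - ε ^ 2 / 512 ≤ Real.cos θ := by nlinarith [hcoslb, hθsq]
  have hcospos : 0 < Real.cos θ := by nlinarith
  have hsin0 : 0 ≤ Real.sin θ := Real.sin_nonneg_of_nonneg_of_le_pi hθ0.le hθpi
  have hpyth : Real.sin θ ^ 2 = 1 - Real.cos θ ^ 2 := by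
    have := Real.sin_sq_add_cos_sq θ; linarith
  -- key: points in the cone have large inner product with r
  have key : ∀ v : EuclideanSpace ℝ (Fin 2), InnerProductGeometry.angle v r ≤ θ →
      ‖v‖ * Real.cos θ ≤ ⟪r, v⟫ := by
    intro v hv
    rcases eq_or_ne v 0 with h0 | h0
    · simp [h0]
    · have hvn : 0 < ‖v‖ := norm_pos_iff.mpr h0
      have hcc : Real.cos θ ≤ Real.cos (InnerProductGeometry.angle v r) :=
        Real.cos_le_cos_of_nonneg_of_le_pi (InnerProductGeometry.angle_nonneg v r) hθpi hv
      have hca := InnerProductGeometry.cos_angle v r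
      rw [hr, mul_one] at hca
      rw [real_inner_comm]
      rw [hca] at hcc
      calc ‖v‖ * Real.cos θ ≤ ‖v‖ * (⟪v, r⟫ / ‖v‖) :=
            mul_le_mul_of_nonneg_left hcc hvn.le
        _ = ⟪v, r⟫ := by field_simp
  set a : EuclideanSpace ℝ (Fin 2) := u - s with ha
  set b : EuclideanSpace ℝ (Fin 2) := q - s with hb
  set A : ℝ := ‖a‖ with hA
  set B : ℝ := ‖b‖ with hB
  set x : ℝ := ⟪r, a⟫ with hx
  set y : ℝ := ⟪r, b⟫ with hy
  have hA0 : 0 ≤ A := norm_nonneg _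
  have hB0 : 0 ≤ B := norm_nonneg _
  have hxA : A * Real.cos θ ≤ x := key a hu
  have hyB : B * Real.cos θ ≤ y := key b hq
  have hyleB : y ≤ B := by
    calc y ≤ ‖r‖ * ‖b‖ := real_inner_le_norm r b
      _ = B := by rw [hr, one_mul, ← hB]
  have hrr : ⟪r, r⟫ = (1 : ℝ) := by
    rw [real_inner_self_eq_norm_sq, hr]; norm_num
  -- orthogonal components
  set a' : EuclideanSpace ℝ (Fin 2) := a - x • r with ha'
  set b' : EuclideanSpace ℝ (Fin 2) := b - y • r with hb'
  have hinnab : ⟪a', b'⟫ = ⟪a, b⟫ - x * y := by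
    simp only [ha', hb', inner_sub_left, inner_sub_right, real_inner_smul_left,
      real_inner_smul_right, hrr]
    rw [hx, hy, real_inner_comm a r]
    ring
  have hna' : ‖a'‖ ^ 2 = A ^ 2 - x ^ 2 := by
    rw [← real_inner_self_eq_norm_sq]
    simp only [ha', inner_sub_left, inner_sub_right, real_inner_smul_left,
      real_inner_smul_right, hrr]
    rw [hx, hA, real_inner_comm a r, real_inner_self_eq_norm_sq]
    ring
  have hnb' : ‖b'‖ ^ 2 = B ^ 2 - y ^ 2 := by
    rw [← real_inner_self_eq_norm_sq]
    simp only [hb', inner_sub_left, inner_sub_right, real_inner_smul_left,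
      real_inner_smul_right, hrr]
    rw [hy, hB, real_inner_comm b r, real_inner_self_eq_norm_sq]
    ring
  have ha'le : ‖a'‖ ≤ A * Real.sin θ := by
    have h1 : ‖a'‖ ^ 2 ≤ (A * Real.sin θ) ^ 2 := by
      rw [hna']
      nlinarith [sq_nonneg x, mul_le_mul_of_nonneg_left hxA (mul_nonneg hA0 hcospos.le)]
    exact le_of_pow_le_pow_left₀ two_ne_zero (by positivity) h1
  have hb'le : ‖b'‖ ≤ B * Real.sin θ := by
    have h1 : ‖b'‖ ^ 2 ≤ (B * Real.sin θ) ^ 2 := by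
      rw [hnb']
      nlinarith [sq_nonneg y, mul_le_mul_of_nonneg_left hyB (mul_nonneg hB0 hcospos.le)]
    exact le_of_pow_le_pow_left₀ two_ne_zero (by positivity) h1
  -- lower bound for ⟪a, b⟫
  have hablb : A * B * (Real.cos θ ^ 2 - Real.sin θ ^ 2) ≤ ⟪a, b⟫ := by
    have hcs : -(‖a'‖ * ‖b'‖) ≤ ⟪a', b'⟫ := neg_le_of_abs_le (abs_real_inner_le_norm a' b')
    have hxy : (A * Real.cos θ) * (B * Real.cos θ) ≤ x * y :=
      mul_le_mul hxA hyB (mul_nonneg hB0 hcospos.le) (le_trans (mul_nonneg hA0 hcospos.le) hxA)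
    have hprod : ‖a'‖ * ‖b'‖ ≤ (A * Real.sin θ) * (B * Real.sin θ) :=
      mul_le_mul ha'le hb'le (norm_nonneg _) (by positivity)
    nlinarith [hinnab]
  -- distances
  have hD : dist u q = ‖b - a‖ := by
    have h1 : b - a = q - u := by rw [ha, hb]; abel
    rw [h1]
    exact dist_eq_norm_sub' u q
  have hsu : dist s u = A := by rw [hA, ha]; exact dist_eq_norm_sub' s u
  have hsq' : dist s q = B := by rw [hB, hb]; exact dist_eq_norm_sub' s q
  have hDsq : ‖b - a‖ ^ 2 ≤ A ^ 2 + B ^ 2 - 2 * (A * B * (Real.cos θ ^ 2 - Real.sin θ ^ 2)) := by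
    have h1 := norm_sub_sq_real b a
    have h2 : ⟪b, a⟫ = ⟪a, b⟫ := real_inner_comm a b
    rw [h2, ← hA, ← hB] at h1
    linarith [hablb, h1]
  rw [hsu, hsq', hD]
  -- scalar facts
  have hc2eq : Real.cos θ ^ 2 - Real.sin θ ^ 2 = 2 * Real.cos θ ^ 2 - 1 := by
    rw [hpyth]; ring
  have hc2lb : 1 - ε ^ 2 / 128 ≤ Real.cos θ ^ 2 - Real.sin θ ^ 2 := by
    rw [hc2eq]
    exact aux_c2 ε (Real.cos θ) hε0 hε1 hclb hcos1
  have hcosε : 1 ≤ (1 + ε) * Real.cos θ := aux_coseps ε (Real.cos θ) hε0 hε1 hclb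
  have hAB : A * Real.cos θ ≤ B := le_trans hxA (le_trans hle hyleB)
  have hRnonneg : 0 ≤ (1 + ε) * B - A := aux_R ε A B (Real.cos θ) hε0 hA0 hAB hcosε
  have hstep1 : ε * (1 - ε / 64) ≤ (1 + ε) * (Real.cos θ ^ 2 - Real.sin θ ^ 2) - 1 :=
    aux_step1 ε _ hε0 hε1 hc2lb
  have hcoef : 0 ≤ (1 + ε) * (Real.cos θ ^ 2 - Real.sin θ ^ 2) - 1 := by
    have h64 : (0:ℝ) ≤ ε * (1 - ε / 64) := mul_nonneg hε0.le (by linarith)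
    linarith [hstep1]
  have hscalar : 2 * ε + ε ^ 2 ≤
      2 * (1 + ε) * (Real.cos θ * ((1 + ε) * (Real.cos θ ^ 2 - Real.sin θ ^ 2) - 1)) := by
    have p1 : (1 - ε ^ 2 / 512) * (ε * (1 - ε / 64)) ≤
        Real.cos θ * ((1 + ε) * (Real.cos θ ^ 2 - Real.sin θ ^ 2) - 1) :=
      mul_le_mul hclb hstep1 (mul_nonneg hε0.le (by linarith)) hcospos.le
    have p2 := aux_poly ε hε0 hε1
    have p3 := mul_le_mul_of_nonneg_left p1 (by linarith : (0:ℝ) ≤ 2 * (1 + ε))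
    calc 2 * ε + ε ^ 2
        ≤ 2 * (1 + ε) * ((1 - ε ^ 2 / 512) * (ε * (1 - ε / 64))) := p2
      _ ≤ 2 * (1 + ε) * (Real.cos θ *
            ((1 + ε) * (Real.cos θ ^ 2 - Real.sin θ ^ 2) - 1)) := p3
  -- final squared inequality
  have hfinal : (1 + ε) * ‖b - a‖ ≤ (1 + ε) * B - A := by
    have hsq2 := aux_sq ε A B (Real.cos θ) (Real.cos θ ^ 2 - Real.sin θ ^ 2) ‖b - a‖
      hε0 hA0 hB0 hcospos.le hAB hDsq hcoef hscalar
    exact le_of_pow_le_pow_left₀ two_ne_zero hRnonneg hsq2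
  linarith [norm_nonneg (b - a)]
end

section
/- Let 0 < ε ≤ 1, let r be a unit vector in the Euclidean plane, and let q, s, u be points with angle(s − q, r) ≤ ε/16, angle(u − q, r) ≤ ε/16, and ⟪r, u − q⟫ ≤ ⟪r, s − q⟫ (both s and u lie in the cone with apex q, axis r, and opening angle ε/8, and u has cone distance at most that of s). Then dist(q, u) ≤ (1 + ε) · dist(q, s). -/
open Real EuclideanGeometry RealInnerProductSpace

/-- The consequence of the paper's Lemma 3 used in Corollary 5.2: if both `s` and `u`
lie in the cone with apex `q`, axis `r` and opening angle `ε/8` (half-angle `ε/16`),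
and `u` has cone distance at most that of `s`, then `dist q u ≤ (1+ε)·dist q s`. -/
theorem cone_min_is_eps_close
    (ε : ℝ) (hε0 : 0 < ε) (hε1 : ε ≤ 1)
    (r : EuclideanSpace ℝ (Fin 2)) (hr : ‖r‖ = 1)
    (q s u : EuclideanSpace ℝ (Fin 2))
    (hs : InnerProductGeometry.angle (s - q) r ≤ ε / 16)
    (hu : InnerProductGeometry.angle (u - q) r ≤ ε / 16)
    (hle : ⟪r, u - q⟫ ≤ ⟪r, s - q⟫) :
    dist q u ≤ (1 + ε) * dist q s := by
  have hdu : dist q u = ‖u - q‖ := by rw [dist_comm, dist_eq_norm]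
  have hds : dist q s = ‖s - q‖ := by rw [dist_comm, dist_eq_norm]
  rw [hdu, hds]
  -- cos bound
  have hcos2 : (1 : ℝ) - (ε/16)^2/2 ≤ Real.cos (ε/16) := Real.one_sub_sq_div_two_le_cos
  have hcospos : (0:ℝ) < Real.cos (ε/16) := by nlinarith
  have hkey : ‖u - q‖ * Real.cos (ε/16) ≤ ‖s - q‖ := by
    have hCS : ⟪r, s - q⟫ ≤ ‖s - q‖ := by
      calc ⟪r, s - q⟫ ≤ ‖r‖ * ‖s - q‖ := real_inner_le_norm _ _
        _ = ‖s - q‖ := by rw [hr, one_mul]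
    rcases eq_or_ne u q with h | h
    · rw [h, sub_self, norm_zero, zero_mul]
      exact norm_nonneg _
    · have hne : u - q ≠ 0 := sub_ne_zero.mpr h
      have hnorm : (0:ℝ) < ‖u - q‖ := norm_pos_iff.mpr hne
      have hcosangle := InnerProductGeometry.cos_angle (u - q) r
      have hangle_nonneg := InnerProductGeometry.angle_nonneg (u - q) r
      have hmono : Real.cos (ε/16) ≤ Real.cos (InnerProductGeometry.angle (u - q) r) := by
        apply Real.cos_le_cos_of_nonneg_of_le_pi hangle_nonneg _ hu
        nlinarith [Real.pi_gt_three]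
      rw [hcosangle, hr, mul_one] at hmono
      have : ‖u - q‖ * Real.cos (ε/16) ≤ ⟪u - q, r⟫ := by
        have := (le_div_iff₀ hnorm).mp hmono
        linarith
      calc ‖u - q‖ * Real.cos (ε/16) ≤ ⟪u - q, r⟫ := this
        _ = ⟪r, u - q⟫ := real_inner_comm _ _
        _ ≤ ⟪r, s - q⟫ := hle
        _ ≤ ‖s - q‖ := hCS
  -- (1+ε) * cos(ε/16) ≥ 1
  have hfactor : (1:ℝ) ≤ (1 + ε) * Real.cos (ε/16) := by nlinarith
  nlinarith [norm_nonneg (u - q), norm_nonneg (s - q)]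
end

section
/- Let 0 < β < π/2, and let r, n₁, n₂ be unit vectors in the Euclidean plane with angle(n₁, r) = π/2 − β, angle(n₂, r) = π/2 − β, and angle(n₁, n₂) = π − 2β. Then for every nonzero vector x: angle(x, r) ≤ β if and only if 0 ≤ ⟪n₁, x⟫ and 0 ≤ ⟪n₂, x⟫. -/
/-!
The angle conditions say that `⟪n₁, r⟫ = ⟪n₂, r⟫ = sin β` and `⟪n₁, n₂⟫ = 2 sin² β - 1`, which
forces `n₁ + n₂ = 2 sin β • r`, while `n₁ - n₂` is orthogonal to `r` with `‖n₁ - n₂‖ = 2 cos β`.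
In the plane, Parseval for the orthogonal pair `r, n₁ - n₂` then gives, for every `x`,
`⟪n₁, x⟫ + ⟪n₂, x⟫ = 2 sin β ⟪r, x⟫` and `⟪n₁, x⟫ ⟪n₂, x⟫ = ⟪r, x⟫² - cos² β ‖x‖²`.
Two reals are nonnegative iff their sum and product are, and `angle x r ≤ β` means
`cos β ‖x‖ ≤ ⟪r, x⟫`, i.e. `0 ≤ ⟪r, x⟫` and `cos² β ‖x‖² ≤ ⟪r, x⟫²`.
-/

open Real InnerProductGeometry RealInnerProductSpace Module

theorem nonneg_and_nonneg_iff_add_nonneg_and_mul_nonneg {u v : ℝ} :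
    0 ≤ u ∧ 0 ≤ v ↔ 0 ≤ u + v ∧ 0 ≤ u * v := by
  refine ⟨fun ⟨hu, hv⟩ => ⟨add_nonneg hu hv, mul_nonneg hu hv⟩, fun ⟨hsum, hprod⟩ => ?_⟩
  rcases mul_nonneg_iff.1 hprod with h | ⟨hu, hv⟩
  · exact h
  · constructor <;> linarith

theorem le_iff_nonneg_and_sq_le_sq {α : Type*} [Ring α] [LinearOrder α]
    [IsStrictOrderedRing α] {a b : α} (hb : 0 ≤ b) : b ≤ a ↔ 0 ≤ a ∧ b ^ 2 ≤ a ^ 2 :=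
  ⟨fun h => ⟨hb.trans h, pow_le_pow_left₀ hb h 2⟩,
    fun ⟨ha, h⟩ => (sq_le_sq₀ hb ha).1 h⟩

variable {E : Type*} [NormedAddCommGroup E] [InnerProductSpace ℝ E]

namespace InnerProductGeometry

theorem angle_le_iff_cos_mul_le_inner {x y : E} (hx : x ≠ 0) (hy : y ≠ 0) {β : ℝ}
    (hβ0 : 0 ≤ β) (hβπ : β ≤ π) : angle x y ≤ β ↔ cos β * (‖x‖ * ‖y‖) ≤ ⟪x, y⟫ := by
  rw [← cos_angle_mul_norm_mul_norm, mul_le_mul_iff_left₀ (by positivity)]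
  exact (strictAntiOn_cos.le_iff_ge ⟨hβ0, hβπ⟩ ⟨angle_nonneg x y, angle_le_pi x y⟩).symm

end InnerProductGeometry

theorem sq_inner_add_sq_inner_of_orthonormal (hE : finrank ℝ E = 2) {r s : E}
    (h : Orthonormal ℝ ![r, s]) (x : E) : ⟪r, x⟫ ^ 2 + ⟪s, x⟫ ^ 2 = ‖x‖ ^ 2 := by
  let b := (basisOfOrthonormalOfCardEqFinrank h (by simp [hE])).toOrthonormalBasis
    (by simpa using h)
  simpa [b, Fin.sum_univ_two] using b.sum_sq_inner_right x

theorem sq_inner_eq_of_inner_eq_zero (hE : finrank ℝ E = 2) {r d : E} (hr : ‖r‖ = 1)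
    (hrd : ⟪r, d⟫ = 0) (x : E) : ⟪d, x⟫ ^ 2 = ‖d‖ ^ 2 * (‖x‖ ^ 2 - ⟪r, x⟫ ^ 2) := by
  rcases eq_or_ne d 0 with rfl | hd
  · simp
  have hd' : ‖d‖ ≠ 0 := norm_ne_zero_iff.2 hd
  have h : Orthonormal ℝ ![r, ‖d‖⁻¹ • d] := by
    simp [hr, norm_smul, hd', real_inner_smul_right, hrd]
  rw [← sq_inner_add_sq_inner_of_orthonormal hE h x, real_inner_smul_left]
  field_simp
  ring

section Cone

variable {r n₁ n₂ : E} {c : ℝ}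

theorem add_eq_two_mul_smul_of_inner_eq (hr : ‖r‖ = 1) (hn₁ : ‖n₁‖ = 1) (hn₂ : ‖n₂‖ = 1)
    (h₁ : ⟪n₁, r⟫ = c) (h₂ : ⟪n₂, r⟫ = c) (h₁₂ : ⟪n₁, n₂⟫ = 2 * c ^ 2 - 1) :
    n₁ + n₂ = (2 * c) • r := by
  rw [← sub_eq_zero, ← inner_self_eq_zero (𝕜 := ℝ)]
  simp only [inner_sub_left, inner_sub_right, inner_add_left, inner_add_right,
    real_inner_smul_left, real_inner_smul_right, real_inner_self_eq_norm_sq r,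
    real_inner_self_eq_norm_sq n₁, real_inner_self_eq_norm_sq n₂, real_inner_comm n₁ r,
    real_inner_comm n₂ r, real_inner_comm n₁ n₂, hr, hn₁, hn₂, h₁, h₂, h₁₂]
  ring

theorem inner_add_inner_eq_of_inner_eq (hr : ‖r‖ = 1) (hn₁ : ‖n₁‖ = 1) (hn₂ : ‖n₂‖ = 1)
    (h₁ : ⟪n₁, r⟫ = c) (h₂ : ⟪n₂, r⟫ = c) (h₁₂ : ⟪n₁, n₂⟫ = 2 * c ^ 2 - 1) (x : E) :
    ⟪n₁, x⟫ + ⟪n₂, x⟫ = 2 * c * ⟪r, x⟫ := by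
  rw [← inner_add_left, add_eq_two_mul_smul_of_inner_eq hr hn₁ hn₂ h₁ h₂ h₁₂,
    real_inner_smul_left]

theorem inner_mul_inner_eq_of_inner_eq (hE : finrank ℝ E = 2) (hr : ‖r‖ = 1)
    (hn₁ : ‖n₁‖ = 1) (hn₂ : ‖n₂‖ = 1) (h₁ : ⟪n₁, r⟫ = c) (h₂ : ⟪n₂, r⟫ = c)
    (h₁₂ : ⟪n₁, n₂⟫ = 2 * c ^ 2 - 1) (x : E) :
    ⟪n₁, x⟫ * ⟪n₂, x⟫ = ⟪r, x⟫ ^ 2 - (1 - c ^ 2) * ‖x‖ ^ 2 := by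
  have hsum := inner_add_inner_eq_of_inner_eq hr hn₁ hn₂ h₁ h₂ h₁₂ x
  have hperp : ⟪r, n₁ - n₂⟫ = 0 := by
    rw [inner_sub_right, real_inner_comm, h₁, real_inner_comm, h₂, sub_self]
  have hnorm : ‖n₁ - n₂‖ ^ 2 = 4 * (1 - c ^ 2) := by
    rw [norm_sub_sq_real, hn₁, hn₂, h₁₂]
    ring
  have hdiff := sq_inner_eq_of_inner_eq_zero hE hr hperp x
  rw [hnorm, inner_sub_left] at hdiff
  -- `4 ⟪n₁, x⟫ ⟪n₂, x⟫ = (⟪n₁, x⟫ + ⟪n₂, x⟫)² - (⟪n₁, x⟫ - ⟪n₂, x⟫)²`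
  linear_combination ((⟪n₁, x⟫ + ⟪n₂, x⟫ + 2 * c * ⟪r, x⟫) * hsum - hdiff) / 4

theorem angle_le_iff_inner_nonneg_and_inner_nonneg (hE : finrank ℝ E = 2) {β : ℝ}
    (hβ0 : 0 < β) (hβ : β ≤ π / 2) (hr : ‖r‖ = 1) (hn₁ : ‖n₁‖ = 1) (hn₂ : ‖n₂‖ = 1)
    (h₁ : ⟪n₁, r⟫ = sin β) (h₂ : ⟪n₂, r⟫ = sin β) (h₁₂ : ⟪n₁, n₂⟫ = 2 * sin β ^ 2 - 1)
    {x : E} (hx : x ≠ 0) : angle x r ≤ β ↔ 0 ≤ ⟪n₁, x⟫ ∧ 0 ≤ ⟪n₂, x⟫ := by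
  have hsin : 0 < sin β := sin_pos_of_pos_of_lt_pi hβ0 (by linarith [pi_pos])
  have hcos : 0 ≤ cos β := cos_nonneg_of_neg_pi_div_two_le_of_le (by linarith [pi_pos]) hβ
  rw [angle_le_iff_cos_mul_le_inner hx (norm_ne_zero_iff.1 (hr ▸ one_ne_zero)) hβ0.le
      (by linarith [pi_pos]), hr, mul_one, real_inner_comm,
    nonneg_and_nonneg_iff_add_nonneg_and_mul_nonneg,
    inner_add_inner_eq_of_inner_eq hr hn₁ hn₂ h₁ h₂ h₁₂,
    inner_mul_inner_eq_of_inner_eq hE hr hn₁ hn₂ h₁ h₂ h₁₂, ← cos_sq', ← mul_pow, sub_nonneg,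
    mul_nonneg_iff_of_pos_left (by positivity)]
  exact le_iff_nonneg_and_sq_le_sq (by positivity)

end Cone

/-- The geometric fact underlying the paper's Lemma 15: membership in a cone of
half-angle `β` with axis `r` is equivalent to nonnegativity of the projections onto the
two inward normals `n₁, n₂` of the cone's bounding half-lines. -/
theorem cone_membership_iff_normals
    (β : ℝ) (hβ0 : 0 < β) (hβ : β < Real.pi / 2)
    (r n₁ n₂ : EuclideanSpace ℝ (Fin 2))
    (hr : ‖r‖ = 1) (hn₁ : ‖n₁‖ = 1) (hn₂ : ‖n₂‖ = 1)
    (ha₁ : InnerProductGeometry.angle n₁ r = Real.pi / 2 - β)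
    (ha₂ : InnerProductGeometry.angle n₂ r = Real.pi / 2 - β)
    (ha₁₂ : InnerProductGeometry.angle n₁ n₂ = Real.pi - 2 * β) :
    ∀ x : EuclideanSpace ℝ (Fin 2), x ≠ 0 →
      (InnerProductGeometry.angle x r ≤ β ↔ 0 ≤ ⟪n₁, x⟫ ∧ 0 ≤ ⟪n₂, x⟫) := by
  intro x hx
  have h₁ : ⟪n₁, r⟫ = sin β := by
    rw [← cos_angle_mul_norm_mul_norm, ha₁, hn₁, hr, cos_pi_div_two_sub, mul_one, mul_one]
  have h₂ : ⟪n₂, r⟫ = sin β := by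
    rw [← cos_angle_mul_norm_mul_norm, ha₂, hn₂, hr, cos_pi_div_two_sub, mul_one, mul_one]
  have h₁₂ : ⟪n₁, n₂⟫ = 2 * sin β ^ 2 - 1 := by
    rw [← cos_angle_mul_norm_mul_norm, ha₁₂, hn₁, hn₂, cos_pi_sub, cos_two_mul, cos_sq']
    ring
  exact angle_le_iff_inner_nonneg_and_inner_nonneg finrank_euclideanSpace_fin hβ0 hβ.le hr hn₁
    hn₂ h₁ h₂ h₁₂ hx
end

section
/- Let 0 < ε ≤ 1. Let D be a finite set of unit vectors in the Euclidean plane such that every nonzero vector v satisfies angle(v, r) ≤ ε/16 for some r ∈ D. Let S be a finite nonempty set of points and q a point with q ∉ S. For r ∈ D put S_r = {s ∈ S : angle(s − q, r) ≤ ε/16}. Let sel be a function assigning to each r ∈ D with S_r nonempty a point sel(r) ∈ S_r satisfying ⟪r, sel(r) − q⟫ ≤ ⟪r, s − q⟫ for all s ∈ S_r (a minimal cone neighbor of q in the cone of r). Then there exists r ∈ D with S_r nonempty such that dist(q, sel(r)) ≤ (1 + ε) · dist(q, s) for every s ∈ S. -/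
open Real InnerProductGeometry RealInnerProductSpace

/-- Correctness of the paper's Corollary 5.2 (dynamic Euclidean ε-close neighbor
searching): among the minimal cone neighbors of `q` over a covering cone family `D`,
some reported site is ε-close to `q` with respect to the site set `S`. -/
theorem eps_close_neighbor_via_cones
    (ε : ℝ) (hε0 : 0 < ε) (hε1 : ε ≤ 1)
    (D : Finset (EuclideanSpace ℝ (Fin 2)))
    (hDunit : ∀ r ∈ D, ‖r‖ = 1)
    (hDcover : ∀ v : EuclideanSpace ℝ (Fin 2), v ≠ 0 →
      ∃ r ∈ D, InnerProductGeometry.angle v r ≤ ε / 16)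
    (S : Finset (EuclideanSpace ℝ (Fin 2))) (hS : S.Nonempty)
    (q : EuclideanSpace ℝ (Fin 2)) (hq : q ∉ S)
    (sel : EuclideanSpace ℝ (Fin 2) → EuclideanSpace ℝ (Fin 2))
    (hsel : ∀ r ∈ D,
      (∃ s ∈ S, InnerProductGeometry.angle (s - q) r ≤ ε / 16) →
        sel r ∈ S ∧ InnerProductGeometry.angle (sel r - q) r ≤ ε / 16 ∧
          ∀ s ∈ S, InnerProductGeometry.angle (s - q) r ≤ ε / 16 →
            ⟪r, sel r - q⟫ ≤ ⟪r, s - q⟫) :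
    ∃ r ∈ D, (∃ s ∈ S, InnerProductGeometry.angle (s - q) r ≤ ε / 16) ∧
      ∀ s ∈ S, dist q (sel r) ≤ (1 + ε) * dist q s := by
  obtain ⟨t, htS, htmin⟩ := S.exists_min_image (fun s => dist q s) hS
  have htq : t - q ≠ 0 := sub_ne_zero.2 (fun h => hq (h ▸ htS))
  obtain ⟨r, hrD, hang⟩ := hDcover (t - q) htq
  have hr1 : ‖r‖ = 1 := hDunit r hrD
  have hne : ∃ s ∈ S, InnerProductGeometry.angle (s - q) r ≤ ε / 16 := ⟨t, htS, hang⟩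
  obtain ⟨huS, huang, humin⟩ := hsel r hrD hne
  refine ⟨r, hrD, hne, fun s hsS => ?_⟩
  set u := sel r with hu
  -- inner products as cosines
  have hinner : ∀ v : EuclideanSpace ℝ (Fin 2),
      ⟪r, v - q⟫ = Real.cos (InnerProductGeometry.angle (v - q) r) * ‖v - q‖ := by
    intro v
    rw [real_inner_comm]
    have := InnerProductGeometry.cos_angle_mul_norm_mul_norm (v - q) r
    rw [hr1] at this
    simpa using this.symm
  have hkey : ⟪r, u - q⟫ ≤ ⟪r, t - q⟫ := humin t htS hang
  rw [hinner u, hinner t] at hkey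
  -- cos bounds
  have hεpi : ε / 16 ≤ Real.pi := by nlinarith [Real.pi_gt_three]
  have hcosu : Real.cos (ε / 16) ≤ Real.cos (InnerProductGeometry.angle (u - q) r) := by
    exact Real.cos_le_cos_of_nonneg_of_le_pi (InnerProductGeometry.angle_nonneg _ _) hεpi huang
  have hcoslb : 1 - (ε / 16) ^ 2 / 2 ≤ Real.cos (ε / 16) :=
    Real.one_sub_sq_div_two_le_cos
  have hcost : Real.cos (InnerProductGeometry.angle (t - q) r) ≤ 1 := Real.cos_le_one _
  have hta : (0:ℝ) ≤ ‖t - q‖ := norm_nonneg _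
  have hua : (0:ℝ) ≤ ‖u - q‖ := norm_nonneg _
  -- (1+ε) * cos θ_u ≥ 1
  have hcu : 1 ≤ (1 + ε) * Real.cos (InnerProductGeometry.angle (u - q) r) := by
    nlinarith
  have h1 : Real.cos (InnerProductGeometry.angle (u - q) r) * ‖u - q‖ ≤ ‖t - q‖ := by
    nlinarith
  have h2 : ‖u - q‖ ≤ (1 + ε) * ‖t - q‖ := by
    nlinarith [mul_le_mul_of_nonneg_right hcu hua]
  have hd : dist q u ≤ (1 + ε) * dist q t := by
    rw [dist_eq_norm', dist_eq_norm']
    exact h2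
  calc dist q u ≤ (1 + ε) * dist q t := hd
    _ ≤ (1 + ε) * dist q s := by
        have := htmin s hsS
        nlinarith
end

section
/- Let 0 < ε ≤ 1, let S be a finite set of points in the Euclidean plane, and let E be a binary relation on points (the edges of the cone graph) such that: for all u, w ∈ S with u ≠ w there exist u' ∈ S and a unit vector r with E u u', angle(w − u, r) ≤ ε/16, angle(u' − u, r) ≤ ε/16, and ⟪r, u' − u⟫ ≤ ⟪r, w − u⟫. Then for all u, w ∈ S there exist n ∈ ℕ and points p₀, p₁, …, pₙ in S with p₀ = u, pₙ = w, E pᵢ pᵢ₊₁ for every i < n, and ∑_{i<n} dist(pᵢ, pᵢ₊₁) ≤ (1 + ε) · dist(u, w). -/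
open Real InnerProductGeometry RealInnerProductSpace

set_option maxHeartbeats 1000000

lemma scalar1 (x c : ℝ) (hx : 0 < x) (hx1 : x ≤ 1) (hc : 1 - x^2/512 ≤ c) (hc1 : c ≤ 1) :
    2*x + x^2 ≤ 2*(1+x)*c*((1+x)*(2*c^2-1)-1) := by
  have hd : 0 ≤ 1 - c := by linarith
  have hd2 : 1 - c ≤ x^2/512 := by nlinarith
  have hd3 : 1 - c ≤ 1/512 := by nlinarith
  nlinarith [mul_nonneg hd hx.le, mul_nonneg (mul_nonneg hd hx.le) hx.le,
    mul_nonneg (mul_nonneg (mul_nonneg hd hx.le) hx.le) hx.le,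
    mul_nonneg (mul_nonneg hd hd) hx.le, mul_nonneg (mul_nonneg hd hd) hd,
    mul_nonneg (mul_nonneg (mul_nonneg hd hd) hx.le) hx.le,
    mul_nonneg (mul_nonneg (mul_nonneg hd hd) hd) hx.le,
    mul_nonneg (mul_nonneg (mul_nonneg hd hd) hd) (mul_nonneg hx.le hx.le),
    mul_le_mul hd2 hd3 hd (by positivity : (0:ℝ) ≤ x^2/512),
    mul_le_mul hd2 hx1 hx.le (by positivity : (0:ℝ) ≤ x^2/512),
    mul_le_mul hd3 hx1 hx.le (by norm_num : (0:ℝ) ≤ 1/512)]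

lemma inner_lb (A B c α β ip : ℝ) (hA : 0 < A) (hB : 0 < B) (hc0 : 0 < c) (hc1 : c ≤ 1)
    (hαc : A*c ≤ α) (hβc : B*c ≤ β) (hαa : α ≤ A) (hβb : β ≤ B)
    (hperp : (ip - α*β)^2 ≤ (A^2 - α^2) * (B^2 - β^2)) : A*B*(2*c^2-1) ≤ ip := by
  have hα0 : 0 < α := lt_of_lt_of_le (by positivity) hαc
  have hβ0 : 0 < β := lt_of_lt_of_le (by positivity) hβc
  have hp1 : A^2 - α^2 ≤ A^2 * (1 - c^2) := by nlinarith [mul_nonneg (sub_nonneg.2 hαc) (by positivity : (0:ℝ) ≤ α + A*c)]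
  have hp2 : B^2 - β^2 ≤ B^2 * (1 - c^2) := by nlinarith [mul_nonneg (sub_nonneg.2 hβc) (by positivity : (0:ℝ) ≤ β + B*c)]
  have hp1' : (0:ℝ) ≤ A^2 - α^2 := by nlinarith [mul_nonneg (sub_nonneg.2 hαa) (by positivity : (0:ℝ) ≤ A + α)]
  have hp2' : (0:ℝ) ≤ B^2 - β^2 := by nlinarith [mul_nonneg (sub_nonneg.2 hβb) (by positivity : (0:ℝ) ≤ B + β)]
  have h1c2 : (0:ℝ) ≤ 1 - c^2 := by nlinarith
  have hq : (ip - α*β)^2 ≤ (A*B*(1-c^2))^2 := by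
    calc (ip - α*β)^2 ≤ (A^2 - α^2) * (B^2 - β^2) := hperp
      _ ≤ (A^2 * (1-c^2)) * (B^2 * (1-c^2)) := by
          apply mul_le_mul hp1 hp2 hp2' (by positivity)
      _ = (A*B*(1-c^2))^2 := by ring
  have hY : (0:ℝ) ≤ A*B*(1-c^2) := by positivity
  have habs : -(A*B*(1-c^2)) ≤ ip - α*β := by
    nlinarith [sq_nonneg (ip - α*β + A*B*(1-c^2))]
  have hαβ : A*B*c^2 ≤ α*β := by nlinarith [mul_le_mul hαc hβc (by positivity) hα0.le]
  nlinarith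

lemma main_ineq (x A B L c : ℝ) (hx : 0 < x) (hx1 : x ≤ 1)
    (hc : 1 - x^2/512 ≤ c) (hc1 : c ≤ 1) (hA : 0 < A) (hAcB : A*c ≤ B) (hL0 : 0 ≤ L)
    (hL2 : L^2 ≤ B^2 - 2*A*B*(2*c^2-1) + A^2) :
    0 < B ∧ A + (1+x)*L ≤ (1+x)*B := by
  have hc0 : (0:ℝ) < c := by nlinarith
  have hB : (0:ℝ) < B := lt_of_lt_of_le (by positivity) hAcB
  have hs := scalar1 x c hx hx1 hc hc1
  have hbr : 0 < (1+x)*(2*c^2-1) - 1 := by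
    by_contra h
    push_neg at h
    nlinarith [mul_nonneg (by positivity : (0:ℝ) ≤ 2*(1+x)*c) (neg_nonneg.2 h)]
  have key : A^2 * (2*x + x^2) ≤ 2*(1+x)*A*B*((1+x)*(2*c^2-1)-1) := by
    calc A^2 * (2*x + x^2) ≤ A^2 * (2*(1+x)*c*((1+x)*(2*c^2-1)-1)) :=
          mul_le_mul_of_nonneg_left hs (sq_nonneg A)
      _ = 2*(1+x)*A*(A*c)*((1+x)*(2*c^2-1)-1) := by ring
      _ ≤ 2*(1+x)*A*B*((1+x)*(2*c^2-1)-1) := by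
          apply mul_le_mul_of_nonneg_right _ hbr.le
          exact mul_le_mul_of_nonneg_left hAcB (by positivity)
  have hsq : ((1+x)*L)^2 ≤ ((1+x)*B - A)^2 := by nlinarith [hL2, key]
  have hRHS : 0 ≤ (1+x)*B - A := by
    have h1c : 1 ≤ (1+x)*c := by nlinarith
    nlinarith [mul_le_mul_of_nonneg_left hAcB (by linarith : (0:ℝ) ≤ 1+x)]
  have hLle : (1+x)*L ≤ (1+x)*B - A := by
    nlinarith [sq_nonneg ((1+x)*L + ((1+x)*B - A)), mul_nonneg (by linarith : (0:ℝ) ≤ 1+x) hL0]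
  constructor
  · exact hB
  · linarith

lemma key (ε : ℝ) (hε0 : 0 < ε) (hε1 : ε ≤ 1) (u u' w r : EuclideanSpace ℝ (Fin 2))
    (hr : ‖r‖ = 1)
    (h1 : InnerProductGeometry.angle (w - u) r ≤ ε / 16)
    (h2 : InnerProductGeometry.angle (u' - u) r ≤ ε / 16)
    (h3 : ⟪r, u' - u⟫ ≤ ⟪r, w - u⟫) (hne : u ≠ w) :
    dist u' w < dist u w ∧ dist u u' + (1 + ε) * dist u' w ≤ (1 + ε) * dist u w := by
  set a := u' - u with ha_def
  set b := w - u with hb_def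
  have hθ1 : ε / 16 ≤ 1/16 := by linarith
  have ha0 : a ≠ 0 := by
    intro h
    rw [h, angle_zero_left] at h2
    have := Real.pi_gt_three; linarith
  have hb0 : b ≠ 0 := sub_ne_zero.2 (Ne.symm hne)
  have hA : (0:ℝ) < ‖a‖ := norm_pos_iff.2 ha0
  have hB : (0:ℝ) < ‖b‖ := norm_pos_iff.2 hb0
  set c : ℝ := Real.cos (ε/16) with hc_def
  have hcl : 1 - ε^2/512 ≤ c := by
    have := Real.one_sub_sq_div_two_le_cos (x := ε/16)
    nlinarith
  have hc1 : c ≤ 1 := Real.cos_le_one _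
  have hc0 : (0:ℝ) < c := by nlinarith
  have hcos : ∀ v : EuclideanSpace ℝ (Fin 2), v ≠ 0 →
      InnerProductGeometry.angle v r ≤ ε/16 → ‖v‖ * c ≤ ⟪v, r⟫ := by
    intro v hv hang
    have hle : c ≤ Real.cos (InnerProductGeometry.angle v r) := by
      apply Real.cos_le_cos_of_nonneg_of_le_pi (angle_nonneg v r)
      · have := Real.pi_gt_three; linarith
      · exact hang
    rw [cos_angle, hr, mul_one] at hle
    have hv0 : (0:ℝ) < ‖v‖ := norm_pos_iff.2 hv
    calc ‖v‖ * c ≤ ‖v‖ * (⟪v, r⟫ / ‖v‖) := mul_le_mul_of_nonneg_left hle hv0.le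
      _ = ⟪v, r⟫ := by field_simp
  have hga : ‖a‖ * c ≤ ⟪a, r⟫ := hcos a ha0 h2
  have hgb : ‖b‖ * c ≤ ⟪b, r⟫ := hcos b hb0 h1
  have hαa : ⟪a, r⟫ ≤ ‖a‖ := by
    have := real_inner_le_norm a r; rwa [hr, mul_one] at this
  have hβb : ⟪b, r⟫ ≤ ‖b‖ := by
    have := real_inner_le_norm b r; rwa [hr, mul_one] at this
  have h3' : ⟪a, r⟫ ≤ ⟪b, r⟫ := by
    rw [← real_inner_comm a r, ← real_inner_comm b r]; exact h3
  have hAcB : ‖a‖ * c ≤ ‖b‖ := le_trans hga (le_trans h3' hβb)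
  set α : ℝ := ⟪a, r⟫ with hα_def
  set β : ℝ := ⟪b, r⟫ with hβ_def
  have hrr : ⟪r, r⟫ = (1:ℝ) := by
    rw [real_inner_self_eq_norm_mul_norm, hr]; norm_num
  have hra : ⟪r, a⟫ = α := real_inner_comm a r
  have hrb : ⟪r, b⟫ = β := real_inner_comm b r
  have hperp : (⟪a, b⟫ - α * β)^2 ≤ (‖a‖^2 - α^2) * (‖b‖^2 - β^2) := by
    have hCS := real_inner_mul_inner_self_le (a - α • r) (b - β • r)
    have e1 : ⟪a - α • r, b - β • r⟫ = ⟪a, b⟫ - α * β := by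
      simp only [inner_sub_left, inner_sub_right, real_inner_smul_left,
        real_inner_smul_right, hrr, hra, hrb]
      ring
    have e2 : ⟪a - α • r, a - α • r⟫ = ‖a‖^2 - α^2 := by
      simp only [inner_sub_left, inner_sub_right, real_inner_smul_left,
        real_inner_smul_right, hrr, hra]
      rw [real_inner_self_eq_norm_mul_norm]
      ring
    have e3 : ⟪b - β • r, b - β • r⟫ = ‖b‖^2 - β^2 := by
      simp only [inner_sub_left, inner_sub_right, real_inner_smul_left,
        real_inner_smul_right, hrr, hrb]
      rw [real_inner_self_eq_norm_mul_norm]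
      ring
    rw [e1, e2, e3] at hCS
    nlinarith [hCS]
  have hinner : ‖a‖ * ‖b‖ * (2*c^2 - 1) ≤ ⟪a, b⟫ :=
    inner_lb ‖a‖ ‖b‖ c α β ⟪a, b⟫ hA hB hc0 hc1 hga hgb hαa hβb hperp
  have hd1 : dist u u' = ‖a‖ := by rw [dist_eq_norm, norm_sub_rev]
  have hba : b - a = w - u' := by rw [ha_def, hb_def]; abel
  have hd2 : dist u' w = ‖b - a‖ := by rw [dist_eq_norm, hba, norm_sub_rev u' w]
  have hd3 : dist u w = ‖b‖ := by rw [dist_eq_norm, norm_sub_rev]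
  have hab' : ⟪b, a⟫ = ⟪a, b⟫ := real_inner_comm a b
  have hL2 : ‖b - a‖^2 ≤ ‖b‖^2 - 2*‖a‖*‖b‖*(2*c^2-1) + ‖a‖^2 := by
    have := norm_sub_sq_real b a
    rw [hab'] at this
    nlinarith [hinner]
  obtain ⟨hBpos, hmain⟩ := main_ineq ε ‖a‖ ‖b‖ ‖b - a‖ c hε0 hε1 hcl hc1 hA hAcB (norm_nonneg _) hL2
  refine ⟨?_, by rw [hd1, hd2, hd3]; exact hmain⟩
  rw [hd2, hd3]
  have h1ε : (0:ℝ) < 1+ε := by linarith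
  have : (1+ε) * ‖b - a‖ < (1+ε) * ‖b‖ := by nlinarith [hmain, hA]
  exact lt_of_mul_lt_mul_left this h1ε.le



/-- The (1+ε)-spanner property of Clarkson's cone graph (the paper's Lemmas 1 and 5) in
the obstacle-free Euclidean case: if every vertex `u` has, for every other vertex `w`,
an edge to a vertex `u'` lying in a common cone of half-angle `ε/16` with `w` and having
cone distance at most that of `w`, then every pair of vertices is connected by a path of
length at most `(1+ε)` times their Euclidean distance. -/
theorem cone_graph_spanner
    (ε : ℝ) (hε0 : 0 < ε) (hε1 : ε ≤ 1)
    (S : Finset (EuclideanSpace ℝ (Fin 2)))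
    (E : EuclideanSpace ℝ (Fin 2) → EuclideanSpace ℝ (Fin 2) → Prop)
    (hE : ∀ u ∈ S, ∀ w ∈ S, u ≠ w →
      ∃ u' ∈ S, ∃ r : EuclideanSpace ℝ (Fin 2), ‖r‖ = 1 ∧ E u u' ∧
        InnerProductGeometry.angle (w - u) r ≤ ε / 16 ∧
        InnerProductGeometry.angle (u' - u) r ≤ ε / 16 ∧
        ⟪r, u' - u⟫ ≤ ⟪r, w - u⟫) :
    ∀ u ∈ S, ∀ w ∈ S,
      ∃ (n : ℕ) (p : ℕ → EuclideanSpace ℝ (Fin 2)),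
        p 0 = u ∧ p n = w ∧ (∀ i ≤ n, p i ∈ S) ∧
        (∀ i < n, E (p i) (p (i + 1))) ∧
        ∑ i ∈ Finset.range n, dist (p i) (p (i + 1)) ≤ (1 + ε) * dist u w := by
  suffices H : ∀ k : ℕ, ∀ u ∈ S, ∀ w ∈ S,
      (S.filter (fun x => dist x w < dist u w)).card < k →
      ∃ (n : ℕ) (p : ℕ → EuclideanSpace ℝ (Fin 2)),
        p 0 = u ∧ p n = w ∧ (∀ i ≤ n, p i ∈ S) ∧
        (∀ i < n, E (p i) (p (i + 1))) ∧
        ∑ i ∈ Finset.range n, dist (p i) (p (i + 1)) ≤ (1 + ε) * dist u w by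
    intro u hu w hw
    exact H ((S.filter (fun x => dist x w < dist u w)).card + 1) u hu w hw (Nat.lt_succ_self _)
  intro k
  induction k with
  | zero => intro u _ w _ h; exact absurd h (Nat.not_lt_zero _)
  | succ k ih =>
    intro u hu w hw hcard
    by_cases huw : u = w
    · refine ⟨0, fun _ => u, rfl, huw, ?_, ?_, ?_⟩
      · intro i _; exact hu
      · intro i hi; exact absurd hi (Nat.not_lt_zero _)
      · simp [dist_nonneg]
        positivity
    · obtain ⟨u', hu'S, r, hr, hEu, ha1, ha2, ha3⟩ := hE u hu w hw huw
      obtain ⟨hlt, hkey⟩ := key ε hε0 hε1 u u' w r hr ha1 ha2 ha3 huw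
      -- the filtered set shrinks strictly
      have hsub : S.filter (fun x => dist x w < dist u' w) ⊂
          S.filter (fun x => dist x w < dist u w) := by
        apply Finset.ssubset_iff_of_subset ?_ |>.2 ?_
        · intro x hx
          rw [Finset.mem_filter] at hx ⊢
          exact ⟨hx.1, lt_trans hx.2 hlt⟩
        · refine ⟨u', Finset.mem_filter.2 ⟨hu'S, hlt⟩, ?_⟩
          intro hmem
          exact absurd (Finset.mem_filter.1 hmem).2 (lt_irrefl _)
      have hcard' : (S.filter (fun x => dist x w < dist u' w)).card < k := by
        have := Finset.card_lt_card hsub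
        omega
      obtain ⟨n, p, hp0, hpn, hpS, hpE, hsum⟩ := ih u' hu'S w hw hcard'
      refine ⟨n + 1, fun i => if i = 0 then u else p (i - 1), by simp, ?_, ?_, ?_, ?_⟩
      · simp [hpn]
      · intro i hi
        by_cases hi0 : i = 0
        · simp [hi0, hu]
        · simp only [if_neg hi0]
          exact hpS (i - 1) (by omega)
      · intro i hi
        by_cases hi0 : i = 0
        · subst hi0
          simpa [hp0] using hEu
        · have h1 : i - 1 + 1 = i := by omega
          simp only [if_neg hi0, if_neg (by omega : i + 1 ≠ 0)]
          have := hpE (i - 1) (by omega)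
          rw [h1] at this
          simpa using this
      · rw [Finset.sum_range_succ']
        have e0 : dist (if (0:ℕ) = 0 then u else p (0 - 1)) (if (0+1:ℕ) = 0 then u else p (0+1-1)) = dist u u' := by
          simp [hp0]
        have es : ∀ i ∈ Finset.range n,
            dist (if i+1 = 0 then u else p (i+1-1)) (if i+1+1 = 0 then u else p (i+1+1-1))
              = dist (p i) (p (i+1)) := by
          intro i _
          simp
        rw [e0, Finset.sum_congr rfl es]
        have h1ε : (0:ℝ) ≤ 1 + ε := by linarith
        nlinarith [hsum, hkey, mul_le_mul_of_nonneg_left hsum h1ε]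
end

section
/- Let ε > 0, let X be a finite nonempty set of real numbers, and let w : ℝ → ℝ satisfy 0 ≤ w(p) for all p ∈ X and |p − q| ≤ w(p) + w(q) for all p, q ∈ X. Define D(p) = min over q ∈ X of (w(q) + |q − p|). Then there exists a subset A of X with (|A| : ℝ) ≤ 4/ε + 1 such that for every p ∈ X: D(p) ≤ min over a ∈ A of (w(a) + |a − p|) ≤ (1 + ε) · D(p). -/
/-- The paper's Lemma 9 (prune_connections): given candidate anchor positions `X` on a
shortest path (with weights `w` satisfying `|p − q| ≤ w p + w q`), there is a subset `A`
of at most `4/ε + 1` anchors whose weighted distances `(1+ε)`-approximate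
`D(p) = min_{q ∈ X} (w q + |q − p|)` on all of `X`. -/
theorem prune_connections
    (ε : ℝ) (hε : 0 < ε)
    (X : Finset ℝ) (hX : X.Nonempty)
    (w : ℝ → ℝ)
    (hw0 : ∀ p ∈ X, 0 ≤ w p)
    (hwtri : ∀ p ∈ X, ∀ q ∈ X, |p - q| ≤ w p + w q) :
    ∃ A ⊆ X, (A.card : ℝ) ≤ 4 / ε + 1 ∧
      ∀ p ∈ X,
        (∀ a ∈ A, X.inf' hX (fun q => w q + |q - p|) ≤ w a + |a - p|) ∧
        ∃ a ∈ A, w a + |a - p| ≤ (1 + ε) * X.inf' hX (fun q => w q + |q - p|) := by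
  classical
  obtain ⟨c, hcX, hc⟩ := X.exists_min_image w hX
  set W := w c with hWdef
  have hW0 : 0 ≤ W := hw0 c hcX
  set t := ε * W with htdef
  have ht0 : 0 ≤ t := mul_nonneg hε.le hW0
  -- nonnegativity of the normalized values
  have hzR0 : ∀ q ∈ X, 0 ≤ w q + W - q + c := by
    intro q hq
    have h1 := hwtri q hq c hcX
    have h2 : q - c ≤ |q - c| := le_abs_self _
    linarith
  have hzL0 : ∀ q ∈ X, 0 ≤ w q + W + q - c := by
    intro q hq
    have h1 := hwtri q hq c hcX
    have h2 : c - q ≤ |q - c| := by rw [abs_sub_comm]; exact le_abs_self _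
    linarith
  set K : ℕ := ⌈2 / ε⌉₊ - 1 with hKdef
  have h2ε : (0:ℝ) ≤ 2 / ε := by positivity
  have hKle : (K : ℝ) ≤ 2 / ε := by
    rcases Nat.eq_zero_or_pos ⌈2 / ε⌉₊ with h | h
    · rw [hKdef, h]
      simpa using h2ε
    · have h1 : (⌈2 / ε⌉₊ : ℝ) < 2 / ε + 1 := Nat.ceil_lt_add_one h2ε
      have h2 : K + 1 = ⌈2 / ε⌉₊ := Nat.succ_pred_eq_of_pos h
      have h3 : ((K : ℝ) + 1) = (⌈2 / ε⌉₊ : ℝ) := by exact_mod_cast congrArg (Nat.cast (R := ℝ)) h2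
      linarith
  set SR : ℕ → Finset ℝ := fun j => X.filter (fun q => w q + W - q + c < ((j:ℝ) + 1) * t)
    with hSRdef
  set SL : ℕ → Finset ℝ := fun j => X.filter (fun q => w q + W + q - c < ((j:ℝ) + 1) * t)
    with hSLdef
  set A : Finset ℝ := insert c
      (((Finset.range K).image fun j => if h : (SR j).Nonempty then (SR j).min' h else c) ∪
       ((Finset.range K).image fun j => if h : (SL j).Nonempty then (SL j).max' h else c))
    with hAdef
  have hAX : A ⊆ X := by
    intro x hx
    rw [hAdef, Finset.mem_insert] at hx
    rcases hx with rfl | hx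
    · exact hcX
    rcases Finset.mem_union.mp hx with hx | hx
    · obtain ⟨j, _, rfl⟩ := Finset.mem_image.mp hx
      split_ifs with h
      · exact (Finset.mem_filter.mp ((SR j).min'_mem h)).1
      · exact hcX
    · obtain ⟨j, _, rfl⟩ := Finset.mem_image.mp hx
      split_ifs with h
      · exact (Finset.mem_filter.mp ((SL j).max'_mem h)).1
      · exact hcX
  refine ⟨A, hAX, ?_, ?_⟩
  · -- cardinality bound
    have h1 : A.card ≤ K + K + 1 := by
      calc A.card ≤ _ + 1 := Finset.card_insert_le _ _
        _ ≤ K + K + 1 := by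
            have := Finset.card_union_le
              ((Finset.range K).image fun j => if h : (SR j).Nonempty then (SR j).min' h else c)
              ((Finset.range K).image fun j => if h : (SL j).Nonempty then (SL j).max' h else c)
            have h2 := Finset.card_image_le (s := Finset.range K)
              (f := fun j => if h : (SR j).Nonempty then (SR j).min' h else c)
            have h3 := Finset.card_image_le (s := Finset.range K)
              (f := fun j => if h : (SL j).Nonempty then (SL j).max' h else c)
            simp only [Finset.card_range] at h2 h3
            omega
    have h2 : (A.card : ℝ) ≤ (K : ℝ) + (K : ℝ) + 1 := by exact_mod_cast h1
    have : (4:ℝ) / ε = 2 / ε + 2 / ε := by ring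
    linarith
  · intro p hp
    set D := X.inf' hX (fun q => w q + |q - p|) with hDdef
    have hDW : W ≤ D := by
      apply Finset.le_inf'
      intro q hq
      have := hc q hq
      have := abs_nonneg (q - p)
      linarith
    constructor
    · intro a ha
      exact Finset.inf'_le _ (hAX ha)
    · obtain ⟨q, hqX, hDq⟩ := Finset.exists_mem_eq_inf' hX (fun q => w q + |q - p|)
      have key : ∀ x : ℝ, |x - p| = (p - x) + 2 * max 0 (x - p) := by
        intro x
        rcases le_total x p with h | h
        · rw [abs_of_nonpos (by linarith), max_eq_left (by linarith)]; ring
        · rw [abs_of_nonneg (by linarith), max_eq_right (by linarith)]; ring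
      have keyL : ∀ x : ℝ, |x - p| = (x - p) + 2 * max 0 (p - x) := by
        intro x
        rcases le_total x p with h | h
        · rw [abs_of_nonpos (by linarith), max_eq_right (by linarith)]; ring
        · rw [abs_of_nonneg (by linarith), max_eq_left (by linarith)]; ring
      have htD : t ≤ ε * D := by
        rw [htdef]
        exact mul_le_mul_of_nonneg_left hDW hε.le
      by_cases hR : w q + W - q + c < 2 * W - t
      · -- right-bucket anchor
        have hWpos : 0 < W := by
          rcases hW0.lt_or_eq with h | h
          · exact h
          · exfalso
            have ht' : t = 0 := by rw [htdef, ← h]; ring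
            have := hzR0 q hqX
            rw [← h] at hR
            linarith
        have htpos : 0 < t := mul_pos hε hWpos
        set j : ℕ := ⌊(w q + W - q + c) / t⌋₊ with hjdef
        have hj1 : (j:ℝ) * t ≤ w q + W - q + c := by
          have h1 : (j:ℝ) ≤ (w q + W - q + c) / t :=
            Nat.floor_le (div_nonneg (hzR0 q hqX) ht0)
          calc (j:ℝ) * t ≤ ((w q + W - q + c) / t) * t :=
                mul_le_mul_of_nonneg_right h1 ht0
            _ = w q + W - q + c := by field_simp
        have hj2 : w q + W - q + c < ((j:ℝ) + 1) * t := by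
          have h1 : (w q + W - q + c) / t < (j:ℝ) + 1 := Nat.lt_floor_add_one _
          calc w q + W - q + c = ((w q + W - q + c) / t) * t := by field_simp
            _ < ((j:ℝ) + 1) * t := mul_lt_mul_of_pos_right h1 htpos
        have hqS : q ∈ SR j := by
          rw [hSRdef]
          exact Finset.mem_filter.mpr ⟨hqX, hj2⟩
        have hne : (SR j).Nonempty := ⟨q, hqS⟩
        set b := (SR j).min' hne with hbdef
        have hbS : b ∈ SR j := (SR j).min'_mem hne
        have hbX : b ∈ X := (Finset.mem_filter.mp hbS).1
        have hbz : w b + W - b + c < ((j:ℝ) + 1) * t := (Finset.mem_filter.mp hbS).2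
        have hbq : b ≤ q := (SR j).min'_le q hqS
        have hjK : j < K := by
          have h1 : ((j:ℝ) + 1) * t < 2 * W := by linarith
          have h2 : ((j:ℝ) + 1) * (ε * W) < 2 * W := by rw [← htdef]; exact h1
          have h3 : ((j:ℝ) + 1) * ε < 2 := by nlinarith
          have h4 : ((j:ℝ) + 1) < 2 / ε := (lt_div_iff₀ hε).mpr h3
          have h5 : ((j:ℝ) + 1) < (⌈2 / ε⌉₊ : ℝ) := lt_of_lt_of_le h4 (Nat.le_ceil _)
          have h6 : j + 1 < ⌈2 / ε⌉₊ := by exact_mod_cast h5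
          omega
        have hbA : b ∈ A := by
          rw [hAdef]
          apply Finset.mem_insert_of_mem
          apply Finset.mem_union_left
          apply Finset.mem_image.mpr
          exact ⟨j, Finset.mem_range.mpr hjK, by rw [dif_pos hne]⟩
        refine ⟨b, hbA, ?_⟩
        have hmax : max 0 (b - p) ≤ max 0 (q - p) := max_le_max le_rfl (by linarith)
        have h7 : w b + |b - p| ≤ (w q + |q - p|) + t := by
          rw [key b, key q]
          linarith
        rw [← hDq] at h7
        nlinarith
      · by_cases hL : w q + W + q - c < 2 * W - t
        · -- left-bucket anchor
          have hWpos : 0 < W := by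
            rcases hW0.lt_or_eq with h | h
            · exact h
            · exfalso
              have ht' : t = 0 := by rw [htdef, ← h]; ring
              have := hzL0 q hqX
              rw [← h] at hL
              linarith
          have htpos : 0 < t := mul_pos hε hWpos
          set j : ℕ := ⌊(w q + W + q - c) / t⌋₊ with hjdef
          have hj1 : (j:ℝ) * t ≤ w q + W + q - c := by
            have h1 : (j:ℝ) ≤ (w q + W + q - c) / t :=
              Nat.floor_le (div_nonneg (hzL0 q hqX) ht0)
            calc (j:ℝ) * t ≤ ((w q + W + q - c) / t) * t :=
                  mul_le_mul_of_nonneg_right h1 ht0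
              _ = w q + W + q - c := by field_simp
          have hj2 : w q + W + q - c < ((j:ℝ) + 1) * t := by
            have h1 : (w q + W + q - c) / t < (j:ℝ) + 1 := Nat.lt_floor_add_one _
            calc w q + W + q - c = ((w q + W + q - c) / t) * t := by field_simp
              _ < ((j:ℝ) + 1) * t := mul_lt_mul_of_pos_right h1 htpos
          have hqS : q ∈ SL j := by
            rw [hSLdef]
            exact Finset.mem_filter.mpr ⟨hqX, hj2⟩
          have hne : (SL j).Nonempty := ⟨q, hqS⟩
          set b := (SL j).max' hne with hbdef
          have hbS : b ∈ SL j := (SL j).max'_mem hne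
          have hbX : b ∈ X := (Finset.mem_filter.mp hbS).1
          have hbz : w b + W + b - c < ((j:ℝ) + 1) * t := (Finset.mem_filter.mp hbS).2
          have hbq : q ≤ b := (SL j).le_max' q hqS
          have hjK : j < K := by
            have h1 : ((j:ℝ) + 1) * t < 2 * W := by linarith
            have h2 : ((j:ℝ) + 1) * (ε * W) < 2 * W := by rw [← htdef]; exact h1
            have h3 : ((j:ℝ) + 1) * ε < 2 := by nlinarith
            have h4 : ((j:ℝ) + 1) < 2 / ε := (lt_div_iff₀ hε).mpr h3
            have h5 : ((j:ℝ) + 1) < (⌈2 / ε⌉₊ : ℝ) := lt_of_lt_of_le h4 (Nat.le_ceil _)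
            have h6 : j + 1 < ⌈2 / ε⌉₊ := by exact_mod_cast h5
            omega
          have hbA : b ∈ A := by
            rw [hAdef]
            apply Finset.mem_insert_of_mem
            apply Finset.mem_union_right
            apply Finset.mem_image.mpr
            exact ⟨j, Finset.mem_range.mpr hjK, by rw [dif_pos hne]⟩
          refine ⟨b, hbA, ?_⟩
          have hmax : max 0 (p - b) ≤ max 0 (p - q) := max_le_max le_rfl (by linarith)
          have h7 : w b + |b - p| ≤ (w q + |q - p|) + t := by
            rw [keyL b, keyL q]
            linarith
          rw [← hDq] at h7
          nlinarith
        · -- the minimum-weight anchor c suffices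
          push_neg at hR hL
          refine ⟨c, by rw [hAdef]; exact Finset.mem_insert_self _ _, ?_⟩
          have hDq' : D = w q + |q - p| := by rw [hDdef]; exact hDq
          have h1 : W + (p - c) ≤ D + t := by
            have hm : (0:ℝ) ≤ max 0 (q - p) := le_max_left _ _
            have hq' : w q + |q - p| = (w q + (p - q)) + 2 * max 0 (q - p) := by
              rw [key q]; ring
            rw [hDq', hq']
            linarith
          have h2 : W + (c - p) ≤ D + t := by
            have hm : (0:ℝ) ≤ max 0 (p - q) := le_max_left _ _
            have hq' : w q + |q - p| = (w q + (q - p)) + 2 * max 0 (p - q) := by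
              rw [keyL q]; ring
            rw [hDq', hq']
            linarith
          have h3 : w c + |c - p| ≤ D + t := by
            rcases le_total c p with h | h
            · rw [abs_of_nonpos (by linarith), ← hWdef]; linarith
            · rw [abs_of_nonneg (by linarith), ← hWdef]; linarith
          have h4 : (1 + ε) * D = D + ε * D := by ring
          linarith
end

section
/- Let X be a metric space, L ≥ 0, and γ : ℝ → X a map with dist(γ a, γ b) = |a − b| for all a, b ∈ [0, L]. Let u ∈ X and ε > 0. Then there exists a finite set A ⊆ [0, L] with (|A| : ℝ) ≤ 4/ε + 1 such that for every t ∈ [0, L] there is a ∈ A with dist(u, γ a) + |a − t| ≤ (1 + ε) · dist(u, γ t). -/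
/-!
Let `c` minimize `d t = dist u (γ t)` on `[0, L]` and put `m = d c`. For `c ≤ a ≤ t` the detour
through `a` costs `d a + (t - a) = d t + φ t - φ a` with `φ t = t - d t`, and the triangle
inequality gives `φ t ≤ c + m`. Since `m ≤ d t`, the anchor `c` serves every `t` with
`φ t ≤ c - m + ε m`; the rest of the range of `φ` is cut into `⌊2/ε⌋` slices of width `ε m`, and
the least point of the `k`-th superlevel set `{φ ≥ c - m + (k + 1) ε m}` serves every `t` whose
`φ t` falls in the `k`-th slice. Reflecting `γ` handles `[0, c]`, and both sides share `c`.
-/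

open Set Finset

theorem IsCompact.exists_finset_le_and_sub_lt {α : Type*} [ConditionallyCompleteLinearOrder α]
    [TopologicalSpace α] [OrderClosedTopology α] {s : Set α} (hs : IsCompact s) {φ : α → ℝ}
    (hφ : ContinuousOn φ s) (lo w : ℝ) (N : ℕ) :
    ∃ A : Finset α, ↑A ⊆ s ∧ #A ≤ N ∧
      ∀ t ∈ s, lo ≤ φ t → φ t < lo + N * w → ∃ a ∈ A, a ≤ t ∧ φ t - φ a < w := by
  classical
  rcases le_or_gt w 0 with hw | hw
  · refine ⟨∅, by simp, by simp, fun t _ hlo hlt => ?_⟩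
    nlinarith [N.cast_nonneg (α := ℝ)]
  set S : ℕ → Set α := fun k => s ∩ φ ⁻¹' Ici (lo + k * w)
  have hS : ∀ k, IsCompact (S k) := fun k =>
    hs.of_isClosed_subset (hφ.preimage_isClosed_of_isClosed hs.isClosed isClosed_Ici)
      inter_subset_left
  refine ⟨{k ∈ range N | (S k).Nonempty}.image fun k => sInf (S k), ?_, ?_, ?_⟩
  · intro a ha
    obtain ⟨k, hk, rfl⟩ := Finset.mem_image.1 ha
    exact ((hS k).sInf_mem (Finset.mem_filter.1 hk).2).1
  · exact card_image_le.trans ((card_filter_le _ _).trans (card_range N).le)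
  · intro t ht hlo hlt
    set k := ⌊(φ t - lo) / w⌋₊
    have hk_le : (k : ℝ) * w ≤ φ t - lo :=
      (le_div_iff₀ hw).1 (Nat.floor_le (div_nonneg (sub_nonneg.2 hlo) hw.le))
    have hk_lt : φ t - lo < (k + 1) * w :=
      (div_lt_iff₀ hw).1 (Nat.lt_floor_add_one _)
    have hkN : k < N := Nat.floor_lt (div_nonneg (sub_nonneg.2 hlo) hw.le) |>.2 <|
      (div_lt_iff₀ hw).2 (by linarith)
    have htS : t ∈ S k := ⟨ht, show lo + k * w ≤ φ t by linarith⟩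
    refine ⟨sInf (S k), Finset.mem_image_of_mem _ (Finset.mem_filter.2
      ⟨Finset.mem_range.2 hkN, t, htS⟩), csInf_le (hS k).bddBelow htS, ?_⟩
    have hinf : lo + k * w ≤ φ (sInf (S k)) := ((hS k).sInf_mem ⟨t, htS⟩).2
    linarith

theorem continuousOn_dist_of_dist_eq_abs_sub {X : Type*} [PseudoMetricSpace X] {γ : ℝ → X}
    {s : Set ℝ} (u : X) (hγ : ∀ a ∈ s, ∀ b ∈ s, dist (γ a) (γ b) = |a - b|) :
    ContinuousOn (fun t => dist u (γ t)) s :=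
  (continuous_const.dist continuous_id).comp_continuousOn <|
    (LipschitzOnWith.of_dist_le_mul fun a ha b hb => by
      rw [hγ a ha b hb, NNReal.coe_one, one_mul, Real.dist_eq]).continuousOn

theorem exists_forward_anchors_of_isMinOn {X : Type*} [PseudoMetricSpace X] {γ : ℝ → X}
    {u : X} {c R ε : ℝ} (hcR : c ≤ R) (hε : 0 < ε)
    (hγ : ∀ a ∈ Icc c R, ∀ b ∈ Icc c R, dist (γ a) (γ b) = |a - b|)
    (hmin : IsMinOn (fun t => dist u (γ t)) (Icc c R) c) :
    ∃ A : Finset ℝ, ↑A ⊆ Icc c R ∧ c ∈ A ∧ #A ≤ ⌊2 / ε⌋₊ + 1 ∧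
      ∀ t ∈ Icc c R, ∃ a ∈ A, a ≤ t ∧ dist u (γ a) + (t - a) ≤ (1 + ε) * dist u (γ t) := by
  set d : ℝ → ℝ := fun t => dist u (γ t)
  set m := d c
  set N := ⌊2 / ε⌋₊
  obtain ⟨A, hAs, hAcard, hA⟩ := isCompact_Icc.exists_finset_le_and_sub_lt (φ := fun t => t - d t)
    (continuousOn_id.sub (continuousOn_dist_of_dist_eq_abs_sub u hγ)) (c + (ε - 1) * m) (ε * m) N
  have hcA : c ∈ Icc c R := ⟨le_rfl, hcR⟩
  refine ⟨insert c A, ?_, mem_insert_self _ _, card_insert_le _ _ |>.trans (by omega),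
    fun t ht => ?_⟩
  · rw [coe_insert, Set.insert_subset_iff]
    exact ⟨hcA, hAs⟩
  have hmt : m ≤ d t := hmin ht
  have hφt : t - d t ≤ c + m := by
    have := (hγ t ht c hcA).symm.trans_le (dist_triangle_left (γ t) (γ c) u)
    linarith [le_abs_self (t - c)]
  by_cases hlo : t - d t ≤ c + (ε - 1) * m
  · exact ⟨c, mem_insert_self _ _, ht.1, by nlinarith⟩
  rw [not_le] at hlo
  have hm : 0 < m := by nlinarith [(dist_nonneg : 0 ≤ m)]
  have hN : 2 < ε * (N + 1) := by
    have := Nat.lt_floor_add_one (2 / ε)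
    rwa [div_lt_iff₀' hε] at this
  obtain ⟨a, ha, hat, hφa⟩ := hA t ht hlo.le (by nlinarith)
  exact ⟨a, mem_insert_of_mem ha, hat, by nlinarith⟩

theorem exists_backward_anchors_of_isMinOn {X : Type*} [PseudoMetricSpace X] {γ : ℝ → X}
    {u : X} {R c ε : ℝ} (hRc : R ≤ c) (hε : 0 < ε)
    (hγ : ∀ a ∈ Icc R c, ∀ b ∈ Icc R c, dist (γ a) (γ b) = |a - b|)
    (hmin : IsMinOn (fun t => dist u (γ t)) (Icc R c) c) :
    ∃ A : Finset ℝ, ↑A ⊆ Icc R c ∧ c ∈ A ∧ #A ≤ ⌊2 / ε⌋₊ + 1 ∧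
      ∀ t ∈ Icc R c, ∃ a ∈ A, t ≤ a ∧ dist u (γ a) + (a - t) ≤ (1 + ε) * dist u (γ t) := by
  have hneg : ∀ s ∈ Icc (-c) (-R), -s ∈ Icc R c := fun s hs => ⟨le_neg.1 hs.2, neg_le.1 hs.1⟩
  obtain ⟨A, hAs, hcA, hAcard, hA⟩ := exists_forward_anchors_of_isMinOn (γ := γ ∘ Neg.neg)
    (neg_le_neg hRc) hε
    (fun a ha b hb => by
      rw [Function.comp_apply, Function.comp_apply, hγ _ (hneg a ha) _ (hneg b hb),
        neg_sub_neg, abs_sub_comm])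
    (fun s hs => by simpa using hmin (hneg s hs))
  refine ⟨A.image Neg.neg, ?_, mem_image.2 ⟨-c, hcA, neg_neg c⟩, card_image_le.trans hAcard,
    fun t ht => ?_⟩
  · rw [coe_image, Set.image_subset_iff]
    exact fun s hs => hneg s (hAs hs)
  obtain ⟨a, ha, hat, hcost⟩ := hA (-t) ⟨neg_le_neg ht.2, neg_le_neg ht.1⟩
  refine ⟨-a, mem_image_of_mem _ ha, le_neg.1 hat, ?_⟩
  simpa [sub_eq_add_neg, add_comm] using hcost

/-- The continuous anchor-point property (the paper's Lemmas 8, 9, and 11): for a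
geodesic `γ` parametrized by arc length on `[0, L]` in a metric space and a point `u`,
there are at most `4/ε + 1` anchor parameters `A ⊆ [0, L]` such that every point `γ t`
of the path is `(1+ε)`-approximately reached from `u` via some anchor. -/
theorem continuous_anchor_points
    {X : Type*} [MetricSpace X]
    (L : ℝ) (hL : 0 ≤ L) (γ : ℝ → X)
    (hγ : ∀ a ∈ Set.Icc (0 : ℝ) L, ∀ b ∈ Set.Icc (0 : ℝ) L,
      dist (γ a) (γ b) = |a - b|)
    (u : X) (ε : ℝ) (hε : 0 < ε) :
    ∃ A : Finset ℝ, (A : Set ℝ) ⊆ Set.Icc (0 : ℝ) L ∧ (A.card : ℝ) ≤ 4 / ε + 1 ∧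
      ∀ t ∈ Set.Icc (0 : ℝ) L,
        ∃ a ∈ A, dist u (γ a) + |a - t| ≤ (1 + ε) * dist u (γ t) := by
  obtain ⟨c, hc, hmin⟩ := isCompact_Icc.exists_isMinOn (nonempty_Icc.2 hL)
    (continuousOn_dist_of_dist_eq_abs_sub u hγ)
  have hright : Icc c L ⊆ Icc 0 L := Icc_subset_Icc_left hc.1
  have hleft : Icc 0 c ⊆ Icc 0 L := Icc_subset_Icc_right hc.2
  obtain ⟨AR, hARs, hcAR, hARcard, hAR⟩ := exists_forward_anchors_of_isMinOn hc.2 hε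
    (fun a ha b hb => hγ a (hright ha) b (hright hb)) (hmin.on_subset hright)
  obtain ⟨AL, hALs, hcAL, hALcard, hAL⟩ := exists_backward_anchors_of_isMinOn hc.1 hε
    (fun a ha b hb => hγ a (hleft ha) b (hleft hb)) (hmin.on_subset hleft)
  refine ⟨AR ∪ AL, ?_, ?_, fun t ht => ?_⟩
  · rw [coe_union]
    exact Set.union_subset (hARs.trans hright) (hALs.trans hleft)
  · have hcard : #(AR ∪ AL) ≤ 2 * ⌊2 / ε⌋₊ + 1 := by
      have := card_union_add_card_inter AR AL
      have := card_pos.2 ⟨c, mem_inter.2 ⟨hcAR, hcAL⟩⟩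
      omega
    calc (#(AR ∪ AL) : ℝ) ≤ 2 * ⌊2 / ε⌋₊ + 1 := by exact_mod_cast hcard
      _ ≤ 2 * (2 / ε) + 1 := by gcongr; exact Nat.floor_le (by positivity)
      _ = 4 / ε + 1 := by ring
  rcases le_total c t with hct | htc
  · obtain ⟨a, ha, hat, hcost⟩ := hAR t ⟨hct, ht.2⟩
    exact ⟨a, mem_union_left _ ha, by rwa [abs_sub_comm, abs_of_nonneg (sub_nonneg.2 hat)]⟩
  · obtain ⟨a, ha, hta, hcost⟩ := hAL t ⟨ht.1, htc⟩
    exact ⟨a, mem_union_right _ ha, by rwa [abs_of_nonneg (sub_nonneg.2 hta)]⟩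
end

section
/- Let X be a metric space, n ∈ ℕ, and let σ : Fin (n+1) → X and t : Fin (n+1) → ℝ satisfy dist(σ i, σ j) = |t i − t j| for all i, j (σ is a shortest path whose i-th vertex lies at arc-length position t i). Then for every u ∈ X and every ε > 0 there exists a subset A of Fin (n+1) with (|A| : ℝ) ≤ 4/ε + 1 such that for every index j: dist(u, σ j) ≤ min over i ∈ A of (dist(u, σ i) + dist(σ i, σ j)) ≤ (1 + ε) · dist(u, σ j). -/
/-!
Let `m` be the vertex of the path closest to `u`, at distance `D`. To the right of `m`
(`t m ≤ t j`) the vertex `a` serves `j` within `1 + ε` as soon as `t a ≤ t j` and the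
potential `φ i = dist u (σ i) - t i` satisfies `φ a ≤ φ j + ε D`. Along that side `φ` takes
values in `[φ m - 2D, φ m]`; cutting this interval into bands of width `ε D` and taking in
each band the leftmost vertex gives at most `2/ε` anchors besides `m` itself. The left side
is the mirror image (`t ↦ -t`).
-/

open Finset

/-- Induction on `K`: the top band `[c - δ, c)` is served by its point of least `t`. -/
lemma exists_band_anchors {ι β : Type*} [DecidableEq ι] [LinearOrder β]
    (t : ι → β) (φ : ι → ℝ) (δ : ℝ) :
    ∀ (K : ℕ) (c : ℝ) (S : Finset ι), (∀ j ∈ S, c - K * δ ≤ φ j ∧ φ j < c) →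
      ∃ A : Finset ι, A.card ≤ K ∧ ∀ j ∈ S, ∃ a ∈ A, t a ≤ t j ∧ φ a < φ j + δ := by
  intro K
  induction K with
  | zero =>
    intro c S hS
    refine ⟨∅, le_rfl, fun j hj => ?_⟩
    have := hS j hj
    simp only [Nat.cast_zero, zero_mul, sub_zero] at this
    linarith
  | succ K ih =>
    intro c S hS
    set T := S.filter (fun j => c - δ ≤ φ j)
    obtain ⟨A, hAcard, hA⟩ := ih (c - δ) (S \ T) fun j hj => by
      obtain ⟨hjS, hjT⟩ := mem_sdiff.mp hj
      have := hS j hjS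
      simp only [T, mem_filter, not_and, not_le] at hjT
      push_cast at this
      exact ⟨by linarith, hjT hjS⟩
    rcases T.eq_empty_or_nonempty with hT | hT
    · refine ⟨A, hAcard.trans K.le_succ, fun j hj => hA j ?_⟩
      simpa [hT] using hj
    obtain ⟨a, haT, hamin⟩ := T.exists_min_image t hT
    refine ⟨insert a A, (card_insert_le a A).trans (Nat.succ_le_succ hAcard), fun j hj => ?_⟩
    by_cases hjT : j ∈ T
    · have hφa := (hS a (mem_filter.mp haT).1).2
      have hφj := (mem_filter.mp hjT).2
      exact ⟨a, mem_insert_self a A, hamin j hjT, by linarith⟩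
    · obtain ⟨b, hbA, hb⟩ := hA j (mem_sdiff.mpr ⟨hj, hjT⟩)
      exact ⟨b, mem_insert_of_mem hbA, hb⟩

section Path

variable {X ι : Type*} [PseudoMetricSpace X] {σ : ι → X} {t : ι → ℝ}

lemma dist_add_dist_le_of_potential_le (hσ : ∀ i j, dist (σ i) (σ j) = |t i - t j|)
    {u : X} {ε : ℝ} {a j : ι} (hat : t a ≤ t j)
    (hφ : dist u (σ a) - t a ≤ dist u (σ j) - t j + ε * dist u (σ j)) :
    dist u (σ a) + dist (σ a) (σ j) ≤ (1 + ε) * dist u (σ j) := by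
  rw [hσ, abs_sub_comm, abs_of_nonneg (sub_nonneg.mpr hat)]
  linarith

lemma exists_anchors_of_le [Fintype ι] [DecidableEq ι]
    (hσ : ∀ i j, dist (σ i) (σ j) = |t i - t j|) (u : X) {ε : ℝ} (hε : 0 < ε)
    {m : ι} (hm : ∀ i, dist u (σ m) ≤ dist u (σ i)) :
    ∃ A : Finset ι, (A.card : ℝ) ≤ 2 / ε ∧ ∀ j, t m ≤ t j →
      ∃ a ∈ insert m A, dist u (σ a) + dist (σ a) (σ j) ≤ (1 + ε) * dist u (σ j) := by
  set D := dist u (σ m)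
  set φ : ι → ℝ := fun i => dist u (σ i) - t i
  have hφ_lower : ∀ j, t m ≤ t j → φ m - 2 * D ≤ φ j := fun j hj => by
    have h := dist_triangle_left (σ m) (σ j) u
    rw [hσ, abs_sub_comm, abs_of_nonneg (sub_nonneg.mpr hj)] at h
    simp only [φ]
    linarith
  have hbands : 2 * D ≤ ε * D + ⌊2 / ε⌋₊ * (ε * D) := by
    have h := Nat.lt_floor_add_one (2 / ε)
    rw [div_lt_iff₀ hε] at h
    nlinarith [dist_nonneg (x := u) (y := σ m)]
  obtain ⟨A, hAcard, hA⟩ := exists_band_anchors t φ (ε * D) ⌊2 / ε⌋₊ (φ m - ε * D)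
    (univ.filter fun j => t m ≤ t j ∧ φ j < φ m - ε * D) fun j hj => by
      obtain ⟨hj, hφj⟩ := (mem_filter.mp hj).2
      exact ⟨by linarith [hφ_lower j hj], hφj⟩
  refine ⟨A, ?_, fun j hj => ?_⟩
  · exact (Nat.cast_le.mpr hAcard).trans (Nat.floor_le (by positivity))
  have hεD : ε * D ≤ ε * dist u (σ j) := mul_le_mul_of_nonneg_left (hm j) hε.le
  by_cases hjφ : φ j < φ m - ε * D
  · obtain ⟨a, haA, hat, hφa⟩ := hA j (mem_filter.mpr ⟨mem_univ j, hj, hjφ⟩)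
    exact ⟨a, mem_insert_of_mem haA,
      dist_add_dist_le_of_potential_le hσ hat (by simp only [φ] at hφa; linarith)⟩
  · exact ⟨m, mem_insert_self m A,
      dist_add_dist_le_of_potential_le hσ hj (by simp only [φ] at hjφ; linarith)⟩

end Path

/-- The paper's Lemma 6 (Thorup's discrete anchor points, with `k' = 1/ε`) expressed
metrically: for each point `u` one can choose at most `4/ε + 1` anchor vertices on a
shortest path `σ` so that routing through the best anchor and then along the path
`(1+ε)`-approximates the distance from `u` to every vertex of the path. -/
theorem discrete_anchor_points
    {X : Type*} [MetricSpace X]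
    (n : ℕ) (σ : Fin (n + 1) → X) (t : Fin (n + 1) → ℝ)
    (hσ : ∀ i j, dist (σ i) (σ j) = |t i - t j|)
    (u : X) (ε : ℝ) (hε : 0 < ε) :
    ∃ A : Finset (Fin (n + 1)), (A.card : ℝ) ≤ 4 / ε + 1 ∧
      ∀ j : Fin (n + 1),
        (∀ i ∈ A, dist u (σ j) ≤ dist u (σ i) + dist (σ i) (σ j)) ∧
        ∃ i ∈ A, dist u (σ i) + dist (σ i) (σ j) ≤ (1 + ε) * dist u (σ j) := by
  obtain ⟨m, hm⟩ := Finite.exists_min fun i => dist u (σ i)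
  have hσ_neg : ∀ i j, dist (σ i) (σ j) = |-t i - -t j| := fun i j => by
    rw [hσ, neg_sub_neg, abs_sub_comm]
  obtain ⟨AR, hARcard, hAR⟩ := exists_anchors_of_le hσ u hε hm
  obtain ⟨AL, hALcard, hAL⟩ := exists_anchors_of_le hσ_neg u hε hm
  refine ⟨insert m (AR ∪ AL), ?_, fun j => ⟨fun i _ => dist_triangle _ _ _, ?_⟩⟩
  · calc ((insert m (AR ∪ AL)).card : ℝ) ≤ AR.card + AL.card + 1 := by
          exact_mod_cast (card_insert_le m _).trans (Nat.add_le_add_right (card_union_le AR AL) 1)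
      _ ≤ 2 / ε + 2 / ε + 1 := by linarith
      _ = 4 / ε + 1 := by ring
  rcases le_total (t m) (t j) with hj | hj
  · obtain ⟨a, ha, h⟩ := hAR j hj
    exact ⟨a, insert_subset_insert m subset_union_left ha, h⟩
  · obtain ⟨a, ha, h⟩ := hAL j (neg_le_neg hj)
    exact ⟨a, insert_subset_insert m subset_union_right ha, h⟩
end

section
/- Let X be a metric space, L ≥ 0, and γ : ℝ → X a map with dist(γ a, γ b) = |a − b| for all a, b ∈ [0, L]. Let s ∈ X, δ ≥ 0, and let X₀ be a finite subset of [0, L] with a weight function w : ℝ → ℝ such that dist(s, γ a) ≤ w(a) for every a ∈ X₀, and such that for every t ∈ [0, L] there is a ∈ X₀ with w(a) + |a − t| ≤ (1 + δ) · dist(s, γ t). Then for every ε > 0 there exists A ⊆ X₀ with (|A| : ℝ) ≤ 4/ε + 1 such that for every t ∈ [0, L] there is a ∈ A with w(a) + |a − t| ≤ (1 + ε)(1 + δ) · dist(s, γ t). -/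
lemma oneSide_prune (A : Finset ℝ) (w f : ℝ → ℝ) (W α LL ε : ℝ)
    (hε : 0 < ε) (hW : 0 < W)
    (hf : Continuous f)
    (hlip : ∀ x y : ℝ, f x ≤ f y + |x - y|)
    (hlow : ∀ t ∈ Set.Icc α LL, W ≤ f t)
    (hup : ∀ t ∈ Set.Icc α LL, t - α - W ≤ f t)
    (hach : ∀ t ∈ Set.Icc α LL, ∃ b ∈ A, w b + |b - t| ≤ f t) :
    ∀ n : ℕ, ∀ t₀ ∈ Set.Icc α LL, ∀ b₀ ∈ A, w b₀ + |b₀ - t₀| ≤ f t₀ →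
      W - (t₀ - α - f t₀) < n * ε * W →
      ∃ B : Finset ℝ, B ⊆ A ∧ b₀ ∈ B ∧ B.card ≤ n ∧
        ∀ t ∈ Set.Icc t₀ LL, ∃ a ∈ B, w a + |a - t| ≤ (1 + ε) * f t := by
  intro n
  induction n with
  | zero =>
    intro t₀ ht₀ b₀ hb₀ hcone hσ
    exact absurd hσ (by have := hup t₀ ht₀; push_cast; linarith)
  | succ n ih =>
    intro t₀ ht₀ b₀ hb₀ hcone hσ
    by_cases hS : ∃ t ∈ Set.Icc t₀ LL, (1 + ε) * f t < w b₀ + |b₀ - t|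
    · obtain ⟨t', ht'mem, ht'lt⟩ := hS
      set S : Set ℝ := {t | t ∈ Set.Icc t₀ LL ∧ (1 + ε) * f t < w b₀ + |b₀ - t|} with hSdef
      have hSne : S.Nonempty := ⟨t', ht'mem, ht'lt⟩
      have hSbdd : BddBelow S := ⟨t₀, fun x hx => hx.1.1⟩
      set t₁ := sInf S with ht₁def
      have ht₀t₁ : t₀ ≤ t₁ := le_csInf hSne (fun x hx => hx.1.1)
      have ht₁LL : t₁ ≤ LL := le_trans (csInf_le hSbdd ⟨ht'mem, ht'lt⟩) ht'mem.2
      have ht₁mem : t₁ ∈ Set.Icc α LL := ⟨le_trans ht₀.1 ht₀t₁, ht₁LL⟩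
      have hfail : (1 + ε) * f t₁ ≤ w b₀ + |b₀ - t₁| := by
        have hcl : t₁ ∈ closure S := (isGLB_csInf hSne hSbdd).mem_closure hSne
        have hclosed : IsClosed {t : ℝ | (1 + ε) * f t ≤ w b₀ + |b₀ - t|} :=
          isClosed_le (continuous_const.mul hf)
            (continuous_const.add ((continuous_const.sub continuous_id).abs))
        have hsub : closure S ⊆ {t : ℝ | (1 + ε) * f t ≤ w b₀ + |b₀ - t|} :=
          closure_minimal (fun x hx => le_of_lt hx.2) hclosed
        exact hsub hcl
      have hΔ : w b₀ + |b₀ - t₁| ≤ f t₀ + (t₁ - t₀) := by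
        have h1 : |b₀ - t₁| ≤ |b₀ - t₀| + |t₀ - t₁| := abs_sub_le _ _ _
        have h2 : |t₀ - t₁| = t₁ - t₀ := by
          rw [abs_sub_comm]; exact abs_of_nonneg (by linarith)
        linarith
      have hft₁ : W ≤ f t₁ := hlow t₁ ht₁mem
      obtain ⟨b₁, hb₁A, hb₁⟩ := hach t₁ ht₁mem
      have hσ' : W - (t₁ - α - f t₁) < n * ε * W := by
        have hεf : ε * W ≤ ε * f t₁ := mul_le_mul_of_nonneg_left hft₁ hε.le
        have hexp : (1 + ε) * f t₁ = f t₁ + ε * f t₁ := by ring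
        have hcast : ((n + 1 : ℕ) : ℝ) * ε * W = (n : ℝ) * ε * W + ε * W := by
          push_cast; ring
        rw [hcast] at hσ
        linarith
      obtain ⟨B, hBA, hb₁B, hBcard, hBcov⟩ := ih t₁ ht₁mem b₁ hb₁A hb₁ hσ'
      refine ⟨insert b₀ B, Finset.insert_subset hb₀ hBA, Finset.mem_insert_self _ _, ?_, ?_⟩
      · exact (Finset.card_insert_le _ _).trans (Nat.succ_le_succ hBcard)
      · intro t ht
        by_cases htt : t₁ ≤ t
        · obtain ⟨a, haB, ha⟩ := hBcov t ⟨htt, ht.2⟩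
          exact ⟨a, Finset.mem_insert_of_mem haB, ha⟩
        · refine ⟨b₀, Finset.mem_insert_self _ _, ?_⟩
          by_contra hc
          push_neg at hc
          exact htt (csInf_le hSbdd ⟨ht, hc⟩)
    · push_neg at hS
      refine ⟨{b₀}, Finset.singleton_subset_iff.mpr hb₀, Finset.mem_singleton_self _,
        by simp, ?_⟩
      intro t ht
      exact ⟨b₀, Finset.mem_singleton_self _, hS t ht⟩

/-- Combination of the paper's Lemmas 9, 10 and 11: given a `(1+δ)`-covering set `X₀` of
weighted candidate anchor points for `s` on a geodesic `γ` parametrized by arc length on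
`[0, L]`, one can prune it to a subset `A` of at most `4/ε + 1` anchors that still
`(1+ε)(1+δ)`-covers every point of the path. -/
theorem prune_candidate_anchor_points
    {X : Type*} [MetricSpace X]
    (L : ℝ) (hL : 0 ≤ L) (γ : ℝ → X)
    (hγ : ∀ a ∈ Set.Icc (0 : ℝ) L, ∀ b ∈ Set.Icc (0 : ℝ) L,
      dist (γ a) (γ b) = |a - b|)
    (s : X) (δ : ℝ) (hδ : 0 ≤ δ)
    (X₀ : Finset ℝ) (hX₀ : (X₀ : Set ℝ) ⊆ Set.Icc (0 : ℝ) L)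
    (w : ℝ → ℝ)
    (hw : ∀ a ∈ X₀, dist s (γ a) ≤ w a)
    (hcov : ∀ t ∈ Set.Icc (0 : ℝ) L,
      ∃ a ∈ X₀, w a + |a - t| ≤ (1 + δ) * dist s (γ t)) :
    ∀ ε > (0 : ℝ), ∃ A ⊆ X₀, (A.card : ℝ) ≤ 4 / ε + 1 ∧
      ∀ t ∈ Set.Icc (0 : ℝ) L,
        ∃ a ∈ A, w a + |a - t| ≤ (1 + ε) * (1 + δ) * dist s (γ t) := by

  intro ε hε
  have h0mem : (0:ℝ) ∈ Set.Icc (0:ℝ) L := ⟨le_refl 0, hL⟩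
  obtain ⟨a₀, ha₀X, -⟩ := hcov 0 h0mem
  have hne : X₀.Nonempty := ⟨a₀, ha₀X⟩
  set f : ℝ → ℝ := fun t => X₀.inf' hne (fun a => w a + |a - t|) with hfdef
  obtain ⟨α, hαX, hWeq⟩ := Finset.exists_mem_eq_inf' hne w
  set W := X₀.inf' hne w with hWdef
  have hαIcc : α ∈ Set.Icc (0:ℝ) L := hX₀ hαX
  have hfle : ∀ t : ℝ, ∀ a ∈ X₀, f t ≤ w a + |a - t| := by
    intro t a ha
    exact Finset.inf'_le _ ha
  have hach : ∀ t : ℝ, ∃ b ∈ X₀, w b + |b - t| ≤ f t := by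
    intro t
    obtain ⟨b, hbX, hbeq⟩ := Finset.exists_mem_eq_inf' hne (fun a => w a + |a - t|)
    exact ⟨b, hbX, le_of_eq hbeq.symm⟩
  have hflow : ∀ t : ℝ, W ≤ f t := by
    intro t
    obtain ⟨b, hbX, hb⟩ := hach t
    have h1 : W ≤ w b := Finset.inf'_le _ hbX
    have h2 : 0 ≤ |b - t| := abs_nonneg _
    linarith
  have hdcone : ∀ t ∈ Set.Icc (0:ℝ) L, ∀ a ∈ X₀, dist s (γ t) ≤ w a + |a - t| := by
    intro t ht a ha
    have h1 : dist s (γ t) ≤ dist s (γ a) + dist (γ a) (γ t) := dist_triangle _ _ _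
    rw [hγ a (hX₀ ha) t ht] at h1
    have h2 := hw a ha
    linarith
  have hfd : ∀ t ∈ Set.Icc (0:ℝ) L, dist s (γ t) ≤ f t := by
    intro t ht
    obtain ⟨b, hbX, hb⟩ := hach t
    exact le_trans (hdcone t ht b hbX) hb
  have hlip : ∀ x y : ℝ, f x ≤ f y + |x - y| := by
    intro x y
    obtain ⟨b, hbX, hb⟩ := hach y
    have h1 : f x ≤ w b + |b - x| := hfle x b hbX
    have h2 : |b - x| ≤ |b - y| + |y - x| := abs_sub_le _ _ _
    have h3 : |y - x| = |x - y| := abs_sub_comm _ _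
    have h4 : f y ≤ w b + |b - y| := hfle y b hbX
    linarith
  have hcont : Continuous f := by
    have hl : LipschitzWith 1 f := by
      apply LipschitzWith.of_dist_le_mul
      intro x y
      rw [NNReal.coe_one, one_mul, Real.dist_eq, Real.dist_eq, abs_sub_le_iff]
      constructor
      · have := hlip x y; linarith
      · have h1 := hlip y x
        have h2 : |y - x| = |x - y| := abs_sub_comm _ _
        linarith
    exact hl.continuous
  have hWd : dist s (γ α) ≤ W := by rw [hWeq]; exact hw α hαX
  have hW0 : 0 ≤ W := le_trans dist_nonneg hWd
  have hfup : ∀ t ∈ Set.Icc (0:ℝ) L, |t - α| - W ≤ f t := by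
    intro t ht
    have h1 : dist (γ t) (γ α) ≤ dist (γ t) s + dist s (γ α) := dist_triangle _ _ _
    rw [hγ t ht α hαIcc, dist_comm (γ t) s] at h1
    have h2 := hfd t ht
    linarith
  have hfα : f α ≤ W := by
    have h1 := hfle α α hαX
    simp only [sub_self, abs_zero, add_zero] at h1
    rw [hWeq]
    exact h1
  have hfcov : ∀ t ∈ Set.Icc (0:ℝ) L, f t ≤ (1 + δ) * dist s (γ t) := by
    intro t ht
    obtain ⟨a, haX, hacov⟩ := hcov t ht
    exact le_trans (hfle t a haX) hacov
  have hfinal : ∀ t ∈ Set.Icc (0:ℝ) L, (1 + ε) * f t ≤ (1 + ε) * (1 + δ) * dist s (γ t) := by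
    intro t ht
    have h1 := hfcov t ht
    have h2 : (0:ℝ) ≤ 1 + ε := by linarith
    calc (1+ε) * f t ≤ (1+ε) * ((1+δ) * dist s (γ t)) := mul_le_mul_of_nonneg_left h1 h2
      _ = (1+ε)*(1+δ)*dist s (γ t) := by ring
  rcases eq_or_lt_of_le hW0 with hWz | hWpos
  · -- W = 0 : the single anchor α suffices
    refine ⟨{α}, Finset.singleton_subset_iff.mpr hαX, ?_, ?_⟩
    · have h1 : (0:ℝ) ≤ 4/ε := by positivity
      simp only [Finset.card_singleton, Nat.cast_one]
      linarith
    · intro t ht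
      refine ⟨α, Finset.mem_singleton_self _, ?_⟩
      have h1 := hfup t ht
      have h2 := hfinal t ht
      have h3 := hflow t
      have hwα : w α = 0 := by rw [← hWeq, ← hWz]
      have habs : |α - t| = |t - α| := abs_sub_comm _ _
      have h4 : 0 ≤ ε * f t := mul_nonneg hε.le (by linarith)
      rw [hwα, habs]
      nlinarith
  · set n : ℕ := ⌊2/ε⌋₊ + 1 with hn
    have hnε : 2 < (n:ℝ) * ε := by
      have h1 : 2/ε < (⌊2/ε⌋₊ : ℝ) + 1 := Nat.lt_floor_add_one _
      have h2 : 2/ε * ε < ((⌊2/ε⌋₊:ℝ)+1) * ε := mul_lt_mul_of_pos_right h1 hε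
      rw [div_mul_cancel₀ _ hε.ne'] at h2
      rw [hn]
      push_cast
      linarith
    have hprem : W - (α - α - f α) < (n:ℝ) * ε * W := by
      have h1 : 2 * W < (n:ℝ) * ε * W := by nlinarith
      linarith
    -- right side
    obtain ⟨BR, hBRsub, hαBR, hBRcard, hBRcov⟩ :=
      oneSide_prune X₀ w f W α L ε hε hWpos hcont hlip
        (fun t _ => hflow t)
        (fun t ht => by
          have h1 := hfup t ⟨le_trans hαIcc.1 ht.1, ht.2⟩
          have h2 : t - α ≤ |t - α| := le_abs_self _
          linarith)
        (fun t _ => hach t)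
        n α ⟨le_refl α, hαIcc.2⟩ α hαX
        (by
          have h1 := hflow α
          rw [hWeq] at h1
          simp only [sub_self, abs_zero, add_zero]
          exact h1)
        hprem
    -- left side (reflected)
    obtain ⟨BL', hBLsub', hαBL', hBLcard', hBLcov'⟩ :=
      oneSide_prune (X₀.image (fun x => -x)) (fun x => w (-x)) (fun t => f (-t)) W (-α) 0 ε hε hWpos
        (hcont.comp continuous_neg)
        (fun x y => by
          have h1 := hlip (-x) (-y)
          have habs : |(-x) - (-y)| = |x - y| := by
            rw [show (-x) - (-y) = -(x - y) by ring, abs_neg]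
          rw [habs] at h1
          exact h1)
        (fun t _ => hflow (-t))
        (fun t ht => by
          have hmem : -t ∈ Set.Icc (0:ℝ) L := ⟨by linarith [ht.2], by linarith [ht.1, hαIcc.2]⟩
          have h1 := hfup (-t) hmem
          have h2 : α + t ≤ |(-t) - α| := by
            have habs : |(-t) - α| = |t + α| := by
              rw [show (-t) - α = -(t + α) by ring, abs_neg]
            rw [habs]
            have := le_abs_self (t + α)
            linarith
          linarith)
        (fun t _ => by
          obtain ⟨b, hbX, hb⟩ := hach (-t)
          refine ⟨-b, Finset.mem_image_of_mem _ hbX, ?_⟩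
          have habs : |(-b) - t| = |b - (-t)| := by
            rw [show (-b) - t = -(b - (-t)) by ring, abs_neg]
          show w (-(-b)) + |(-b) - t| ≤ f (-t)
          rw [neg_neg, habs]
          exact hb)
        n (-α) ⟨le_refl _, by linarith [hαIcc.1]⟩ (-α) (Finset.mem_image_of_mem _ hαX)
        (by
          have h1 := hflow α
          rw [hWeq] at h1
          simp only [neg_neg, sub_self, abs_zero, add_zero]
          exact h1)
        (by
          have := hprem
          simp only [neg_neg]
          linarith)
    set BL := BL'.image (fun x => -x) with hBLdef
    have hBLsub : BL ⊆ X₀ := by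
      intro x hx
      rw [hBLdef, Finset.mem_image] at hx
      obtain ⟨y, hy, rfl⟩ := hx
      have h1 := hBLsub' hy
      rw [Finset.mem_image] at h1
      obtain ⟨z, hz, rfl⟩ := h1
      rwa [neg_neg]
    have hαBL : α ∈ BL := by
      have h1 : α = -(-α) := (neg_neg α).symm
      rw [hBLdef, h1]
      exact Finset.mem_image_of_mem _ hαBL'
    have hBLcard : BL.card ≤ n := le_trans (Finset.card_image_le) hBLcard'
    refine ⟨BR ∪ BL, Finset.union_subset hBRsub hBLsub, ?_, ?_⟩
    · have hsub2 : BR ∪ BL ⊆ BR ∪ (BL.erase α) := by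
        intro x hx
        rcases Finset.mem_union.mp hx with h | h
        · exact Finset.mem_union_left _ h
        · by_cases hxα : x = α
          · exact Finset.mem_union_left _ (hxα ▸ hαBR)
          · exact Finset.mem_union_right _ (Finset.mem_erase.mpr ⟨hxα, h⟩)
      have h1 : (BR ∪ BL).card ≤ BR.card + (BL.erase α).card :=
        le_trans (Finset.card_le_card hsub2) (Finset.card_union_le _ _)
      have h2 : (BL.erase α).card = BL.card - 1 := Finset.card_erase_of_mem hαBL
      have h3 : 1 ≤ BL.card := Finset.card_pos.mpr ⟨α, hαBL⟩
      have h4 : (BR ∪ BL).card ≤ 2 * ⌊2/ε⌋₊ + 1 := by omega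
      have h5 : ((⌊2/ε⌋₊ : ℕ) : ℝ) ≤ 2/ε := Nat.floor_le (by positivity)
      have h6 : ((BR ∪ BL).card : ℝ) ≤ 2 * ((⌊2/ε⌋₊ : ℕ) : ℝ) + 1 := by
        have := h4
        exact_mod_cast Nat.cast_le.mpr h4
      have h7 : 2 * (2/ε) = 4/ε := by ring
      linarith
    · intro t ht
      by_cases htα : α ≤ t
      · obtain ⟨a, haBR, ha⟩ := hBRcov t ⟨htα, ht.2⟩
        exact ⟨a, Finset.mem_union_left _ haBR, le_trans ha (hfinal t ht)⟩
      · push_neg at htα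
        have hmem : -t ∈ Set.Icc (-α) 0 := ⟨by linarith, by linarith [ht.1]⟩
        obtain ⟨a, haBL', ha⟩ := hBLcov' (-t) hmem
        refine ⟨-a, Finset.mem_union_right _ (Finset.mem_image_of_mem _ haBL'), ?_⟩
        have habs : |(-a) - t| = |a - (-t)| := by
          rw [show (-a) - t = -(a - (-t)) by ring, abs_neg]
        rw [neg_neg] at ha
        calc w (-a) + |(-a) - t| = w (-a) + |a - (-t)| := by rw [habs]
          _ ≤ (1 + ε) * f t := ha
          _ ≤ _ := hfinal t ht
end

section
/- Let X be a metric space, L ≥ 0, and γ : ℝ → X a map with dist(γ a, γ b) = |a − b| for all a, b ∈ [0, L]. Let s, t ∈ X and ε ≥ 0. Let A_s, A_t be finite subsets of [0, L] with weight functions w_s, w_t : ℝ → ℝ satisfying dist(s, γ a) ≤ w_s(a) for all a ∈ A_s and dist(t, γ b) ≤ w_t(b) for all b ∈ A_t. Suppose there exists t₀ ∈ [0, L] with dist(s, t) = dist(s, γ t₀) + dist(γ t₀, t) (a shortest path between s and t crosses γ), and there exist a₀ ∈ A_s with w_s(a₀) + |a₀ − t₀| ≤ (1 + ε) · dist(s,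 γ t₀) and b₀ ∈ A_t with w_t(b₀) + |b₀ − t₀| ≤ (1 + ε) · dist(γ t₀, t). Then: (i) for all a ∈ A_s and b ∈ A_t, dist(s, t) ≤ w_s(a) + |a − b| + w_t(b); and (ii) there exist a ∈ A_s and b ∈ A_t with w_s(a) + |a − b| + w_t(b) ≤ (1 + ε) · dist(s, t). Consequently the estimate d̂(s,t) = min over a ∈ A_s, b ∈ A_t of (w_s(a) + |a − b| + w_t(b)) satisfies dist(s,t) ≤ d̂(s,t) ≤ (1+ε)·dist(s,t). -/
/-- Query correctness in the paper's Lemma 12 (graph_and_shortest_path_datastructure),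
expressed metrically: if a shortest path between `s` and `t` crosses the separator
geodesic `γ` and both `s` and `t` have `(1+ε)`-good anchors near the crossing point,
then every anchor-to-anchor estimate is at least `dist s t`, some anchor-to-anchor
estimate is at most `(1+ε)·dist s t`, and consequently the minimum estimate `d̂(s,t)`
satisfies `dist s t ≤ d̂(s,t) ≤ (1+ε)·dist s t`. -/
theorem anchor_to_anchor_estimate
    {X : Type*} [MetricSpace X]
    (L : ℝ) (hL : 0 ≤ L) (γ : ℝ → X)
    (hγ : ∀ a ∈ Set.Icc (0 : ℝ) L, ∀ b ∈ Set.Icc (0 : ℝ) L,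
      dist (γ a) (γ b) = |a - b|)
    (s t : X) (ε : ℝ) (hε : 0 ≤ ε)
    (As At : Finset ℝ)
    (hAs : (As : Set ℝ) ⊆ Set.Icc (0 : ℝ) L)
    (hAt : (At : Set ℝ) ⊆ Set.Icc (0 : ℝ) L)
    (ws wt : ℝ → ℝ)
    (hws : ∀ a ∈ As, dist s (γ a) ≤ ws a)
    (hwt : ∀ b ∈ At, dist t (γ b) ≤ wt b)
    (t₀ : ℝ) (ht₀ : t₀ ∈ Set.Icc (0 : ℝ) L)
    (hcross : dist s t = dist s (γ t₀) + dist (γ t₀) t)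
    (a₀ : ℝ) (ha₀ : a₀ ∈ As)
    (ha₀good : ws a₀ + |a₀ - t₀| ≤ (1 + ε) * dist s (γ t₀))
    (b₀ : ℝ) (hb₀ : b₀ ∈ At)
    (hb₀good : wt b₀ + |b₀ - t₀| ≤ (1 + ε) * dist (γ t₀) t) :
    (∀ a ∈ As, ∀ b ∈ At, dist s t ≤ ws a + |a - b| + wt b) ∧
    (∃ a ∈ As, ∃ b ∈ At, ws a + |a - b| + wt b ≤ (1 + ε) * dist s t) ∧
    (dist s t ≤ sInf {x : ℝ | ∃ a ∈ As, ∃ b ∈ At, x = ws a + |a - b| + wt b} ∧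
      sInf {x : ℝ | ∃ a ∈ As, ∃ b ∈ At, x = ws a + |a - b| + wt b} ≤
        (1 + ε) * dist s t) := by

  have lower : ∀ a ∈ As, ∀ b ∈ At, dist s t ≤ ws a + |a - b| + wt b := by
    intro a ha b hb
    have h1 : dist s t ≤ dist s (γ a) + dist (γ a) (γ b) + dist (γ b) t :=
      dist_triangle4 s (γ a) (γ b) t
    have h2 := hγ a (hAs ha) b (hAt hb)
    have h3 := hws a ha
    have h4 := hwt b hb
    rw [dist_comm t (γ b)] at h4
    linarith
  have upper : ws a₀ + |a₀ - b₀| + wt b₀ ≤ (1 + ε) * dist s t := by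
    have htri : |a₀ - b₀| ≤ |a₀ - t₀| + |b₀ - t₀| := by
      have := abs_sub_le a₀ t₀ b₀
      rw [abs_sub_comm t₀ b₀] at this
      linarith
    have : (1 + ε) * dist s t = (1 + ε) * dist s (γ t₀) + (1 + ε) * dist (γ t₀) t := by
      rw [hcross]; ring
    linarith
  refine ⟨lower, ⟨a₀, ha₀, b₀, hb₀, upper⟩, ?_, ?_⟩
  · refine le_csInf ⟨ws a₀ + |a₀ - b₀| + wt b₀, a₀, ha₀, b₀, hb₀, rfl⟩ ?_
    rintro x ⟨a, ha, b, hb, rfl⟩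
    exact lower a ha b hb
  · refine le_trans (csInf_le ?_ ⟨a₀, ha₀, b₀, hb₀, rfl⟩) upper
    exact ⟨dist s t, by rintro x ⟨a, ha, b, hb, rfl⟩; exact lower a ha b hb⟩
end

section
/- Let X be a metric space, L ≥ 0, and γ : ℝ → X a map with dist(γ a, γ b) = |a − b| for all a, b ∈ [0, L]. Let q ∈ X with a finite nonempty set A_q ⊆ [0, L] and weights w_q : ℝ → ℝ satisfying dist(q, γ a) ≤ w_q(a) for all a ∈ A_q. Let S be a finite nonempty set of points, where each s ∈ S has a finite nonempty set A_s ⊆ [0, L] and weights w_s : ℝ → ℝ satisfying dist(s, γ b) ≤ w_s(b) for all b ∈ A_s; define est(s) = min over a ∈ A_q, b ∈ A_s of (w_q(a) + |a − b| + w_s(b)). Let ε ≥ 0 and suppose s* ∈ S satisfies dist(q, s*) ≤ dist(q, s) for all s ∈ S, that there exists t₀ ∈ [0, L] with dist(q, s*) = dist(q, γ t₀) + dist(γ t₀, s*), and that there exist a₀ ∈ A_q with w_q(a₀) + |a₀ − t₀| ≤ (1 + ε) · dist(q, γ t₀) and b₀ ∈ A_{s*} with w_{s*}(b₀) + |b₀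 − t₀| ≤ (1 + ε) · dist(γ t₀, s*). Then every s ∈ S with est(s) ≤ est(s') for all s' ∈ S satisfies dist(q, s) ≤ est(s) ≤ (1 + ε) · dist(q, s*). -/
/-- The anchor-to-anchor distance estimate between a query with anchor set `Aq`
(weights `wq`) and a site with anchor set `As` (weights `ws`), routing from the query to
an anchor, along the separator path between the two anchors, and on to the site. -/
noncomputable def anchorEst (wq : ℝ → ℝ) (Aq : Finset ℝ) (ws : ℝ → ℝ) (As : Finset ℝ) :
    ℝ :=
  sInf {x : ℝ | ∃ a ∈ Aq, ∃ b ∈ As, x = wq a + |a - b| + ws b}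

/-- Nearest-neighbor query correctness underlying the paper's Section 5 data structure:
if a shortest path from the query `q` to its true nearest neighbor `s*` crosses the
separator geodesic `γ`, and both `q` and `s*` have `(1+ε)`-good anchors near the
crossing point, then any site of `S` minimizing the anchor-to-anchor estimate is
ε-close to `q`. -/
theorem nearest_neighbor_query_correctness
    {X : Type*} [MetricSpace X]
    (L : ℝ) (hL : 0 ≤ L) (γ : ℝ → X)
    (hγ : ∀ a ∈ Set.Icc (0 : ℝ) L, ∀ b ∈ Set.Icc (0 : ℝ) L,
      dist (γ a) (γ b) = |a - b|)
    (q : X)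
    (Aq : Finset ℝ) (hAqne : Aq.Nonempty) (hAq : (Aq : Set ℝ) ⊆ Set.Icc (0 : ℝ) L)
    (wq : ℝ → ℝ) (hwq : ∀ a ∈ Aq, dist q (γ a) ≤ wq a)
    (S : Finset X) (hS : S.Nonempty)
    (A : X → Finset ℝ)
    (hAne : ∀ s ∈ S, (A s).Nonempty)
    (hA : ∀ s ∈ S, ((A s : Set ℝ)) ⊆ Set.Icc (0 : ℝ) L)
    (w : X → ℝ → ℝ)
    (hw : ∀ s ∈ S, ∀ b ∈ A s, dist s (γ b) ≤ w s b)
    (ε : ℝ) (hε : 0 ≤ ε)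
    (sstar : X) (hsstar : sstar ∈ S)
    (hclosest : ∀ s ∈ S, dist q sstar ≤ dist q s)
    (t₀ : ℝ) (ht₀ : t₀ ∈ Set.Icc (0 : ℝ) L)
    (hcross : dist q sstar = dist q (γ t₀) + dist (γ t₀) sstar)
    (a₀ : ℝ) (ha₀ : a₀ ∈ Aq)
    (ha₀good : wq a₀ + |a₀ - t₀| ≤ (1 + ε) * dist q (γ t₀))
    (b₀ : ℝ) (hb₀ : b₀ ∈ A sstar)
    (hb₀good : w sstar b₀ + |b₀ - t₀| ≤ (1 + ε) * dist (γ t₀) sstar) :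
    ∀ s ∈ S, (∀ s' ∈ S, anchorEst wq Aq (w s) (A s) ≤ anchorEst wq Aq (w s') (A s')) →
      dist q s ≤ anchorEst wq Aq (w s) (A s) ∧
        anchorEst wq Aq (w s) (A s) ≤ (1 + ε) * dist q sstar := by
  intro s hs hmin
  -- lower bound: dist q s ≤ every element of the set
  have hlow : ∀ s' ∈ S, ∀ x ∈ {x : ℝ | ∃ a ∈ Aq, ∃ b ∈ A s', x = wq a + |a - b| + w s' b},
      dist q s' ≤ x := by
    rintro s' hs' x ⟨a, ha, b, hb, rfl⟩
    have h1 : dist q s' ≤ dist q (γ a) + dist (γ a) (γ b) + dist (γ b) s' := by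
      calc dist q s' ≤ dist q (γ b) + dist (γ b) s' := dist_triangle _ _ _
        _ ≤ dist q (γ a) + dist (γ a) (γ b) + dist (γ b) s' := by
            have := dist_triangle q (γ a) (γ b); linarith
    have h2 : dist (γ a) (γ b) = |a - b| := hγ a (hAq ha) b (hA s' hs' hb)
    have h3 := hwq a ha
    have h4 := hw s' hs' b hb
    have h5 : dist (γ b) s' = dist s' (γ b) := dist_comm _ _
    linarith [h1, h2 ▸ h1]
  have hbdd : ∀ s' ∈ S, BddBelow {x : ℝ | ∃ a ∈ Aq, ∃ b ∈ A s', x = wq a + |a - b| + w s' b} :=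
    fun s' hs' => ⟨dist q s', fun x hx => hlow s' hs' x hx⟩
  have hne : ∀ s' ∈ S, {x : ℝ | ∃ a ∈ Aq, ∃ b ∈ A s', x = wq a + |a - b| + w s' b}.Nonempty := by
    intro s' hs'
    obtain ⟨a, ha⟩ := hAqne
    obtain ⟨b, hb⟩ := hAne s' hs'
    exact ⟨_, a, ha, b, hb, rfl⟩
  constructor
  · exact le_csInf (hne s hs) (fun x hx => hlow s hs x hx)
  · have h1 : anchorEst wq Aq (w s) (A s) ≤ anchorEst wq Aq (w sstar) (A sstar) :=
      hmin sstar hsstar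
    have h2 : anchorEst wq Aq (w sstar) (A sstar) ≤ wq a₀ + |a₀ - b₀| + w sstar b₀ :=
      csInf_le (hbdd sstar hsstar) ⟨a₀, ha₀, b₀, hb₀, rfl⟩
    have h3 : |a₀ - b₀| ≤ |a₀ - t₀| + |t₀ - b₀| := abs_sub_le _ _ _
    have h4 : |t₀ - b₀| = |b₀ - t₀| := abs_sub_comm _ _
    have : wq a₀ + |a₀ - b₀| + w sstar b₀ ≤
        (1 + ε) * (dist q (γ t₀) + dist (γ t₀) sstar) := by
      rw [mul_add]; linarith
    rw [hcross]
    calc anchorEst wq Aq (w s) (A s) ≤ wq a₀ + |a₀ - b₀| + w sstar b₀ := le_trans h1 h2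
      _ ≤ (1 + ε) * (dist q (γ t₀) + dist (γ t₀) sstar) := this
end
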